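/- arXiv:1208.2639 — 5 statements merged into one kernel-verified Lean document; each statement's English description precedes it below -/
import Mathlib

section
/- Let G be a topological group and γ : ℝ → G a continuous curve with γ(0) = 1. Define γₙ(t) := γ(t/n)ⁿ. Assume there exists ε > 0 such that the sequence of restrictions γₙ|[−ε,ε] converges uniformly (in the sense of right translates of identity neighborhoods) to some limit curve. Then the sequence γₙ converges uniformly on every compact subset of ℝ. -/
/-!
Write `γₙ(t) = γ(t/n)ⁿ` and `m = ⌊n/2⌋`. Then `γₙ(t) = γ(t/n)^(n mod 2) · γₘ(mt/n)²`, so uniform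
convergence `γₙ → θ` on `[-c, c]` propagates to uniform convergence `γₙ → θ(·/2)²` on `[-2c, 2c]`:
the factor `γ(t/n)` tends to `1`, `mt/n` is uniformly close to `t/2`, and the limit `θ` is
continuous, hence uniformly continuous on `[-c, c]` with compact image, over which conjugation
is uniformly continuous at `1`. Iterating covers every compact set, and since `G` is Hausdorff all
these limits agree with the pointwise limit of `γₙ`.
-/

open Set Filter Topology

/- The uniform convergence of the statement is `TendstoUniformlyOn` for the left uniformity,
in which `x` and `y` are close when `x⁻¹ * y` is near `1`. -/
attribute [local instance] IsTopologicalGroup.leftUniformSpace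

noncomputable def powRescale {M : Type*} [Monoid M] (γ : ℝ → M) (n : ℕ) (t : ℝ) : M :=
  γ (t / n) ^ n

section PowRescale

variable {M : Type*} [Monoid M]

/-- For `n = 2m` and `n = 2m + 1` these are `γ₂ₘ(t) = γₘ(t/2)²` and
`γ₂ₘ₊₁(t) = γ(t/(2m+1)) · γₘ(mt/(2m+1))²`. -/
theorem powRescale_eq_mul_sq (γ : ℝ → M) (n : ℕ) (t : ℝ) :
    powRescale γ n t = γ (t / n) ^ (n % 2) * powRescale γ (n / 2) ((n / 2 : ℕ) * t / n) ^ 2 := by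
  rcases Nat.eq_zero_or_pos (n / 2) with hm | hm
  · rw [hm, powRescale, powRescale, pow_zero, one_pow, mul_one, Nat.mod_eq_of_lt (by omega)]
  · have hm' : ((n / 2 : ℕ) : ℝ) ≠ 0 := by positivity
    rw [powRescale, powRescale, mul_div_assoc, mul_div_cancel_left₀ _ hm', ← pow_mul, ← pow_add,
      mul_comm, Nat.mod_add_div]

theorem continuous_powRescale [TopologicalSpace M] [ContinuousMul M] {γ : ℝ → M}
    (hγ : Continuous γ) (n : ℕ) : Continuous (powRescale γ n) :=
  (hγ.comp (continuous_id.div_const _)).pow n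

end PowRescale

theorem abs_nat_div_two_mul_div_le (n : ℕ) (t : ℝ) : |(n / 2 : ℕ) * t / n| ≤ |t| / 2 := by
  rcases Nat.eq_zero_or_pos n with rfl | hn
  · simp only [CharP.cast_eq_zero, div_zero, abs_zero]
    positivity
  have hn' : (0 : ℝ) < n := by exact_mod_cast hn
  have h2m : 2 * ((n / 2 : ℕ) : ℝ) ≤ n := by exact_mod_cast Nat.mul_div_le n 2
  rw [abs_div, abs_mul, Nat.abs_cast, abs_of_pos hn', div_le_div_iff₀ hn' two_pos]
  nlinarith [abs_nonneg t]

theorem abs_half_sub_nat_div_two_mul_div_le {n : ℕ} (hn : n ≠ 0) (t : ℝ) :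
    |t / 2 - (n / 2 : ℕ) * t / n| ≤ |t| / (2 * n) := by
  have hn' : (0 : ℝ) < n := by positivity
  have hsplit : (n : ℝ) = 2 * (n / 2 : ℕ) + (n % 2 : ℕ) := by
    exact_mod_cast (Nat.div_add_mod n 2).symm
  have hr : ((n % 2 : ℕ) : ℝ) ≤ 1 := by exact_mod_cast Nat.le_of_lt_succ (Nat.mod_lt n two_pos)
  have heq : t / 2 - (n / 2 : ℕ) * t / n = (n % 2 : ℕ) * t / (2 * n) := by
    field_simp
    rw [hsplit]
    ring
  rw [heq, abs_div, abs_mul, Nat.abs_cast, abs_of_pos (by positivity : (0 : ℝ) < 2 * n)]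
  gcongr
  nlinarith [abs_nonneg t]

section IsTopologicalGroup

variable {G : Type*} [Group G] [TopologicalSpace G] [IsTopologicalGroup G]

theorem Filter.Tendsto.conj_nhds_one_of_mem_compact {α : Type*} {l : Filter α} {C : Set G}
    (hC : IsCompact C) {x y : α → G} (hx : ∀ᶠ a in l, x a ∈ C) (hy : Tendsto y l (𝓝 1)) :
    Tendsto (fun a => (x a)⁻¹ * y a * x a) l (𝓝 1) := by
  have hconj : Tendsto (fun p : G × G => p.1⁻¹ * p.2 * p.1) (𝓝ˢ C ×ˢ 𝓝 1) (𝓝 1) := by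
    rw [← nhdsSet_singleton, ← hC.nhdsSet_prod_eq isCompact_singleton]
    exact (by fun_prop : Continuous _).tendsto_nhdsSet fun p ⟨_, hp⟩ => by simp_all
  exact hconj.comp (((tendsto_principal.2 hx).mono_right principal_le_nhdsSet).prodMk hy)

theorem tendstoUniformlyOn_iff_tendsto_inv_mul {ι α : Type*} {F : ι → α → G} {f : α → G}
    {p : Filter ι} {s : Set α} :
    TendstoUniformlyOn F f p s ↔
      Tendsto (fun q : ι × α => (f q.2)⁻¹ * F q.1 q.2) (p ×ˢ 𝓟 s) (𝓝 1) := by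
  rw [tendstoUniformlyOn_iff_tendsto, uniformity_eq_comap_nhds_one_left, tendsto_comap_iff]
  rfl

theorem tendstoUniformlyOn_atTop_iff_inv_mul {ι α : Type*} [Nonempty ι] [SemilatticeSup ι]
    {F : ι → α → G} {f : α → G} {s : Set α} :
    TendstoUniformlyOn F f atTop s ↔
      ∀ U ∈ 𝓝 (1 : G), ∃ N, ∀ n ≥ N, ∀ t ∈ s, (f t)⁻¹ * F n t ∈ U := by
  simp only [tendstoUniformlyOn_iff_tendsto_inv_mul, tendsto_def, mem_prod_principal,
    mem_atTop_sets, mem_preimage]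
  rfl

end IsTopologicalGroup

theorem TendstoUniformlyOn.limUnder {ι α β : Type*} [UniformSpace β] [T2Space β] [Nonempty β]
    {F : ι → α → β} {f : α → β} {p : Filter ι} [p.NeBot] {s : Set α}
    (h : TendstoUniformlyOn F f p s) :
    TendstoUniformlyOn F (fun x => limUnder p (F · x)) p s :=
  h.congr_right fun _ hx => ((h.tendsto_at hx).limUnder_eq).symm

section Doubling

variable {G : Type*} [Group G] [TopologicalSpace G] [IsTopologicalGroup G] {γ : ℝ → G}
theorem TendstoUniformlyOn.powRescale_Icc_two_mul (hγ : Continuous γ) (hγ0 : γ 0 = 1)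
    {θ : ℝ → G} {c : ℝ} (hθ : TendstoUniformlyOn (powRescale γ) θ atTop (Icc (-c) c)) :
    TendstoUniformlyOn (powRescale γ) (fun t => θ (t / 2) ^ 2) atTop (Icc (-(2 * c)) (2 * c)) := by
  set l : Filter (ℕ × ℝ) := atTop ×ˢ 𝓟 (Icc (-(2 * c)) (2 * c))
  set s : ℕ × ℝ → ℝ := fun q => (q.1 / 2 : ℕ) * q.2 / q.1
  have ht : ∀ᶠ q in l, |q.2| ≤ 2 * c :=
    (Eventually.prod_inr (mem_principal_self _) _).mono fun q hq => abs_le.2 hq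
  have hn : ∀ᶠ q in l, q.1 ≠ 0 := (eventually_ne_atTop 0).prod_inl _
  have hs_mem : ∀ᶠ q in l, s q ∈ Icc (-c) c := ht.mono fun q hq => abs_le.1 <| by
    linarith [abs_nat_div_two_mul_div_le q.1 q.2]
  have hhalf_mem : ∀ᶠ q in l, q.2 / 2 ∈ Icc (-c) c := ht.mono fun q hq => abs_le.1 <| by
    rw [abs_div, abs_two]; linarith
  have hθc : ContinuousOn θ (Icc (-c) c) :=
    hθ.continuousOn (.of_forall fun n => (continuous_powRescale hγ n).continuousOn)
  have h_inv : Tendsto (fun q : ℕ × ℝ => (q.1 : ℝ)⁻¹) l (𝓝 0) :=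
    tendsto_inv_atTop_nhds_zero_nat.comp tendsto_fst
  have hodd : Tendsto (fun q : ℕ × ℝ => γ (q.2 / q.1) ^ (q.1 % 2)) l (𝓝 1) := by
    have hdiv : Tendsto (fun q : ℕ × ℝ => q.2 / q.1) l (𝓝 0) := by
      refine squeeze_zero_norm' (ht.mono fun q hq => ?_) (by simpa using h_inv.const_mul (2 * c))
      rw [Real.norm_eq_abs, abs_div, Nat.abs_cast, div_eq_mul_inv]
      gcongr
    have hγt : Tendsto (fun q : ℕ × ℝ => γ (q.2 / q.1)) l (𝓝 1) := hγ0 ▸ (hγ.tendsto 0).comp hdiv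
    rw [tendsto_def]
    intro U hU
    filter_upwards [hγt.eventually_mem hU] with q hq
    rcases Nat.mod_two_eq_zero_or_one q.1 with h | h <;> simp [h, hq, mem_of_mem_nhds hU]
  have hθ_near : Tendsto (fun q => (θ (q.2 / 2))⁻¹ * θ (s q)) l (𝓝 1) := by
    have hu := isCompact_Icc.uniformContinuousOn_of_continuous hθc
    rw [UniformContinuousOn, uniformity_eq_comap_nhds_one_left, tendsto_comap_iff] at hu
    refine hu.comp (f := fun q : ℕ × ℝ => (q.2 / 2, s q))
      (tendsto_inf.2 ⟨?_, tendsto_principal.2 (hhalf_mem.and hs_mem)⟩)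
    rw [Metric.uniformity_eq_comap_nhds_zero, tendsto_comap_iff]
    refine squeeze_zero' (.of_forall fun _ => dist_nonneg) ((ht.and hn).mono fun q hq => ?_)
      (by simpa using h_inv.const_mul c)
    obtain ⟨hq, hq1⟩ := hq
    calc dist (q.2 / 2) (s q) ≤ |q.2| / (2 * q.1) := abs_half_sub_nat_div_two_mul_div_le hq1 q.2
      _ ≤ c * (q.1 : ℝ)⁻¹ := by
        rw [← div_div, div_eq_mul_inv]
        gcongr
        linarith
  have hθ_half : Tendsto (fun q => (θ (s q))⁻¹ * powRescale γ (q.1 / 2) (s q)) l (𝓝 1) :=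
    (tendstoUniformlyOn_iff_tendsto_inv_mul.1 hθ).comp
      (((Nat.tendsto_div_const_atTop two_ne_zero).comp tendsto_fst).prodMk
        (tendsto_principal.2 hs_mem))
  have hC : IsCompact (θ '' Icc (-c) c) := isCompact_Icc.image_of_continuousOn hθc
  have hx : ∀ᶠ q in l, θ (q.2 / 2) ∈ θ '' Icc (-c) c :=
    hhalf_mem.mono fun q hq => mem_image_of_mem θ hq
  -- With `x = θ (t / 2)`, `e = γ (t / n) ^ (n % 2)` and `d = x⁻¹ * γₘ(s)`, the error
  -- `(x ^ 2)⁻¹ * γₙ(t)` equals `x⁻¹ * (x⁻¹ * e * x * d) * x * d`.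
  have hd := by simpa only [mul_one] using hθ_near.mul hθ_half
  have hed := by simpa only [mul_one] using (hodd.conj_nhds_one_of_mem_compact hC hx).mul hd
  have herr := by simpa only [mul_one] using (hed.conj_nhds_one_of_mem_compact hC hx).mul hd
  rw [tendstoUniformlyOn_iff_tendsto_inv_mul]
  refine herr.congr fun q => ?_
  rw [powRescale_eq_mul_sq γ q.1 q.2, sq, sq]
  simp only [s]
  group

theorem TendstoUniformlyOn.exists_powRescale_Icc_two_pow_mul (hγ : Continuous γ) (hγ0 : γ 0 = 1)
    {θ : ℝ → G} {ε : ℝ} (hθ : TendstoUniformlyOn (powRescale γ) θ atTop (Icc (-ε) ε)) (k : ℕ) :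
    ∃ θ' : ℝ → G, TendstoUniformlyOn (powRescale γ) θ' atTop (Icc (-(2 ^ k * ε)) (2 ^ k * ε)) := by
  induction k with
  | zero => exact ⟨θ, by simpa using hθ⟩
  | succ k ih =>
    obtain ⟨θ', hθ'⟩ := ih
    exact ⟨_, by simpa only [pow_succ', mul_assoc] using hθ'.powRescale_Icc_two_mul hγ hγ0⟩

end Doubling

theorem IsCompact.exists_subset_Icc_two_pow_mul {K : Set ℝ} (hK : IsCompact K) {ε : ℝ}
    (hε : 0 < ε) : ∃ k : ℕ, K ⊆ Icc (-(2 ^ k * ε)) (2 ^ k * ε) := by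
  obtain ⟨r, hr⟩ := hK.isBounded.subset_closedBall 0
  obtain ⟨k, hk⟩ := pow_unbounded_of_one_lt (r / ε) one_lt_two
  have hrk : r ≤ 2 ^ k * ε := ((div_lt_iff₀ hε).1 hk).le
  refine ⟨k, hr.trans ?_⟩
  rw [Real.closedBall_eq_Icc, zero_sub, zero_add]
  exact Icc_subset_Icc (neg_le_neg hrk) hrk

/-- **Lemma 3.2 (bootstrap).** Let `G` be a topological group and `γ : ℝ → G` a
continuous curve with `γ 0 = 1`. Set `γₙ(t) := γ(t/n)ⁿ`. If there exists `ε > 0` such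
that `γₙ` restricted to `[-ε, ε]` converges uniformly (in the sense of right translates
of identity neighborhoods) to some limit curve, then `(γₙ)` converges uniformly on every
compact subset of `ℝ`. -/
theorem bootstrap_uniform_convergence
    {G : Type*} [Group G] [TopologicalSpace G] [IsTopologicalGroup G] [T2Space G]
    (γ : ℝ → G) (hγ : Continuous γ) (hγ0 : γ 0 = 1)
    (ε : ℝ) (hε : 0 < ε) (η : ℝ → G)
    (hconv : ∀ U ∈ 𝓝 (1 : G), ∃ N : ℕ, ∀ n ≥ N, ∀ t ∈ Set.Icc (-ε) ε,
      (η t)⁻¹ * (γ (t / n)) ^ n ∈ U) :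
    ∃ η' : ℝ → G, ∀ K : Set ℝ, IsCompact K →
      ∀ U ∈ 𝓝 (1 : G), ∃ N : ℕ, ∀ n ≥ N, ∀ t ∈ K, (η' t)⁻¹ * (γ (t / n)) ^ n ∈ U := by
  have hη : TendstoUniformlyOn (powRescale γ) η atTop (Icc (-ε) ε) :=
    tendstoUniformlyOn_atTop_iff_inv_mul.2 hconv
  refine ⟨fun t => limUnder atTop (powRescale γ · t), fun K hK => ?_⟩
  obtain ⟨k, hKk⟩ := hK.exists_subset_Icc_two_pow_mul hε
  obtain ⟨θ, hθ⟩ := hη.exists_powRescale_Icc_two_pow_mul hγ hγ0 k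
  exact tendstoUniformlyOn_atTop_iff_inv_mul.1 (hθ.limUnder.mono hKk)
end

section
/- Let G be a topological group, V a locally convex space, φ : G → V continuous, and X ∈ Hom(ℝ, G) a continuous one-parameter group such that the n-th directional derivative D_X^n φ (defined by (D_Xφ)(g) = lim_{t→0}(φ(gX(t)) − φ(g))/t, iterated n times) exists and is continuous. Then for every g ∈ G and t ∈ ℝ, φ(gX(t)) = Σ_{j=0}^n (t^j/j!)(D_X^j φ)(g) + t^n χ(g,t), where χ : G × ℝ → V is continuous with χ(g,0) = 0 for all g. -/
/-!
Take `χ(g, t) = t⁻ⁿ R(g, t)`, where `R(g, ·)` is the `n`-th Taylor remainder at `0` of the curve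
`s ↦ φ(g X(s))`, whose `j`-th derivative is `s ↦ (D_X^j φ)(g X(s))`. Away from `t = 0` continuity
is clear. Near `t = 0` one needs a mean value inequality without a norm: if the derivative of a
curve stays in a closed convex set `K`, Hahn–Banach and the real mean value theorem give
`f t - f 0 ∈ t • K`. Iterating it, `R(g, t) ∈ tⁿ • W` as soon as `D_X^n φ(g X(s)) - D_X^n φ(g)`
lies in the closed absolutely convex neighbourhood `W` of `0` for all `s` between `0` and `t`,
which by continuity of `D_X^n φ` holds for `(g, t)` near `(g₀, 0)`.
-/

open Set Filter Topology
open scoped Pointwise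

section SlopeLimit

variable {V : Type*} [AddCommGroup V] [Module ℝ V] [TopologicalSpace V]

/-- The difference-quotient derivative in which `D_X` is defined; Mathlib's `HasDerivAt` has
no calculus API for non-normed targets. -/
def HasSlopeLimit (f : ℝ → V) (v : V) (s : ℝ) : Prop :=
  Tendsto (fun h : ℝ => h⁻¹ • (f (s + h) - f s)) (𝓝[≠] 0) (𝓝 v)

theorem HasSlopeLimit.hasDerivAt_clm {f : ℝ → V} {v : V} {s : ℝ} (hf : HasSlopeLimit f v s)
    (ℓ : V →L[ℝ] ℝ) : HasDerivAt (fun x => ℓ (f x)) (ℓ v) s := by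
  rw [hasDerivAt_iff_tendsto_slope_zero]
  exact ((ℓ.continuous.tendsto v).comp hf).congr fun h => by simp [smul_eq_mul]

theorem HasSlopeLimit.sub_const {f : ℝ → V} {v : V} {s : ℝ} (hf : HasSlopeLimit f v s) (c : V) :
    HasSlopeLimit (fun x => f x - c) v s := by
  simpa [HasSlopeLimit] using hf

theorem HasDerivAt.hasSlopeLimit_smul_const {a : ℝ → ℝ} {a' s : ℝ} [ContinuousSMul ℝ V]
    (ha : HasDerivAt a a' s) (v : V) : HasSlopeLimit (fun x => a x • v) (a' • v) s :=
  (ha.tendsto_slope_zero.smul_const v).congr fun h => by simp only [smul_eq_mul, mul_smul, sub_smul]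

variable [IsTopologicalAddGroup V]

theorem HasSlopeLimit.sub {f g : ℝ → V} {v w : V} {s : ℝ} (hf : HasSlopeLimit f v s)
    (hg : HasSlopeLimit g w s) : HasSlopeLimit (fun x => f x - g x) (v - w) s :=
  (Tendsto.sub hf hg).congr fun h => by simp only [smul_sub]; abel

theorem HasSlopeLimit.finset_sum {ι : Type*} (u : Finset ι) {f : ι → ℝ → V} {v : ι → V} {s : ℝ}
    (hf : ∀ i ∈ u, HasSlopeLimit (f i) (v i) s) :
    HasSlopeLimit (fun x => ∑ i ∈ u, f i x) (∑ i ∈ u, v i) s :=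
  (tendsto_finsetSum u hf).congr fun h => by rw [← Finset.sum_sub_distrib, Finset.smul_sum]

variable [ContinuousSMul ℝ V] [LocallyConvexSpace ℝ V] {K : Set V}

-- Separate `f b - f a` from `(b - a) • K` by a functional `ℓ` and apply the real mean value
-- theorem to `ℓ ∘ f`.
theorem sub_mem_smul_of_hasSlopeLimit_of_lt (hKconv : Convex ℝ K) (hKcl : IsClosed K)
    {f f' : ℝ → V} {a b : ℝ} (hab : a < b) (hf : ∀ s ∈ Icc a b, HasSlopeLimit f (f' s) s)
    (hK : ∀ s ∈ Icc a b, f' s ∈ K) : f b - f a ∈ (b - a) • K := by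
  by_contra hmem
  have hba : 0 < b - a := sub_pos.2 hab
  obtain ⟨ℓ, u, hK_lt, hu_lt⟩ := geometric_hahn_banach_closed_point
    (hKconv.smul (b - a)) (hKcl.smul_of_ne_zero hba.ne') hmem
  have hderiv : ∀ s ∈ Icc a b, HasDerivAt (fun x => ℓ (f x)) (ℓ (f' s)) s :=
    fun s hs => (hf s hs).hasDerivAt_clm ℓ
  obtain ⟨c, hc, hslope⟩ := exists_hasDerivAt_eq_slope (fun x => ℓ (f x)) (fun s => ℓ (f' s)) hab
    (fun s hs => (hderiv s hs).continuousAt.continuousWithinAt)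
    (fun s hs => hderiv s (Ioo_subset_Icc_self hs))
  have hc_lt := hK_lt _ (smul_mem_smul_set (hK c (Ioo_subset_Icc_self hc)))
  rw [map_smul, smul_eq_mul, hslope, mul_div_cancel₀ _ hba.ne', ← map_sub] at hc_lt
  exact hu_lt.not_gt hc_lt

theorem sub_mem_smul_of_hasSlopeLimit (hKconv : Convex ℝ K) (hKcl : IsClosed K)
    {f f' : ℝ → V} {t : ℝ} (hf : ∀ s ∈ uIcc 0 t, HasSlopeLimit f (f' s) s)
    (hK : ∀ s ∈ uIcc 0 t, f' s ∈ K) : f t - f 0 ∈ t • K := by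
  rcases lt_trichotomy t 0 with ht | rfl | ht
  · rw [uIcc_of_ge ht.le] at hf hK
    have h := sub_mem_smul_of_hasSlopeLimit_of_lt hKconv hKcl ht hf hK
    rw [zero_sub, Set.neg_smul_set, Set.mem_neg, neg_sub] at h
    exact h
  · rw [sub_self, zero_smul_set ⟨_, hK 0 (by simp)⟩]
    rfl
  · rw [uIcc_of_le ht.le] at hf hK
    simpa using sub_mem_smul_of_hasSlopeLimit_of_lt hKconv hKcl ht hf hK

end SlopeLimit

theorem hasDerivAt_pow_succ_div_factorial (i : ℕ) (s : ℝ) :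
    HasDerivAt (fun x : ℝ => x ^ (i + 1) / (i + 1).factorial) (s ^ i / i.factorial) s := by
  refine ((hasDerivAt_pow (i + 1) s).div_const _).congr_deriv ?_
  rw [Nat.factorial_succ, Nat.cast_mul]
  field_simp
  push_cast
  ring

section TaylorRemainder

variable {V : Type*} [AddCommGroup V] [Module ℝ V]

/-- `f j` plays the role of the `j`-th derivative of the curve `f 0`; the expansion is at `0`. -/
noncomputable def taylorRemainder (f : ℕ → ℝ → V) (n : ℕ) (t : ℝ) : V :=
  f 0 t - ∑ j ∈ Finset.range (n + 1), (t ^ j / j.factorial) • f j 0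

theorem taylorRemainder_apply_zero (f : ℕ → ℝ → V) (n : ℕ) : taylorRemainder f n 0 = 0 := by
  simp [taylorRemainder, Finset.sum_range_succ']

theorem taylorRemainder_succ (f : ℕ → ℝ → V) (n : ℕ) (t : ℝ) :
    taylorRemainder f (n + 1) t = f 0 t - f 0 0 -
      ∑ i ∈ Finset.range (n + 1), (t ^ (i + 1) / (i + 1).factorial) • f (i + 1) 0 := by
  rw [taylorRemainder, Finset.sum_range_succ' _ (n + 1)]
  simp only [pow_zero, Nat.factorial_zero, Nat.cast_one, div_one, one_smul]
  abel

variable [TopologicalSpace V] [IsTopologicalAddGroup V] [ContinuousSMul ℝ V]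

theorem hasSlopeLimit_taylorRemainder_succ {f : ℕ → ℝ → V} {n : ℕ} {s : ℝ}
    (hf : HasSlopeLimit (f 0) (f 1 s) s) :
    HasSlopeLimit (taylorRemainder f (n + 1)) (taylorRemainder (fun j => f (j + 1)) n s) s := by
  have h := (hf.sub_const (f 0 0)).sub <| HasSlopeLimit.finset_sum (Finset.range (n + 1))
    fun i _ => (hasDerivAt_pow_succ_div_factorial i s).hasSlopeLimit_smul_const (f (i + 1) 0)
  rw [← funext (taylorRemainder_succ f n)] at h
  exact h

/-- The derivative of the `(n + 1)`-st remainder is the `n`-th remainder of the derivatives,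
so the mean value inequality drives an induction on `n` (the factor `1 / n!` is not needed). -/
theorem taylorRemainder_mem_smul [LocallyConvexSpace ℝ V] {K : Set V} (hKconv : Convex ℝ K)
    (hKcl : IsClosed K) (hKbal : Balanced ℝ K) {n : ℕ} {f : ℕ → ℝ → V}
    (hf : ∀ j < n, ∀ s, HasSlopeLimit (f j) (f (j + 1) s) s) {t : ℝ}
    (hK : ∀ s ∈ uIcc 0 t, f n s - f n 0 ∈ K) : taylorRemainder f n t ∈ t ^ n • K := by
  induction n generalizing f t with
  | zero => simpa [taylorRemainder] using hK t right_mem_uIcc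
  | succ n ih =>
    rcases eq_or_ne t 0 with rfl | ht
    · rw [taylorRemainder_apply_zero]
      exact zero_mem_smul_set (hKbal.zero_mem ⟨_, hK 0 left_mem_uIcc⟩)
    have hderiv_mem : ∀ s ∈ uIcc 0 t, taylorRemainder (fun j => f (j + 1)) n s ∈ t ^ n • K := by
      intro s hs
      have hst : |s| ≤ |t| := by simpa using abs_sub_left_of_mem_uIcc hs
      refine hKbal.smul_mono ?_ <| ih (fun j hj => hf (j + 1) (by omega))
        fun s' hs' => hK s' (uIcc_subset_uIcc_left hs hs')
      simpa only [norm_pow, Real.norm_eq_abs] using pow_le_pow_left₀ (abs_nonneg s) hst n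
    have h := sub_mem_smul_of_hasSlopeLimit (hKconv.smul _)
      (hKcl.smul_of_ne_zero (pow_ne_zero n ht))
      (fun s _ => hasSlopeLimit_taylorRemainder_succ (hf 0 n.succ_pos s)) hderiv_mem
    rwa [taylorRemainder_apply_zero, sub_zero, smul_smul, ← pow_succ'] at h

end TaylorRemainder

section OneParameterGroup

variable {G V : Type*} [Group G] [AddCommGroup V] [Module ℝ V] [TopologicalSpace V]

theorem hasSlopeLimit_comp_mul_oneParameter {X : ℝ → G}
    (hXadd : ∀ s t : ℝ, X (s + t) = X s * X t) {F F' : G → V}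
    (hF : ∀ g, Tendsto (fun t : ℝ => t⁻¹ • (F (g * X t) - F g)) (𝓝[≠] 0) (𝓝 (F' g)))
    (g : G) (s : ℝ) : HasSlopeLimit (fun x => F (g * X x)) (F' (g * X s)) s :=
  (hF (g * X s)).congr fun h => by simp only [hXadd, mul_assoc]

theorem eventually_forall_uIcc_of_eventually_nhds_prod {α : Type*} [TopologicalSpace α]
    {P : α × ℝ → Prop} {a : α} (hP : ∀ᶠ p in 𝓝 (a, 0), P p) :
    ∀ᶠ p in 𝓝 (a, (0 : ℝ)), ∀ s ∈ uIcc 0 p.2, P (p.1, s) := by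
  obtain ⟨U, hU, T, hT, hUT⟩ := mem_nhds_prod_iff.1 hP
  obtain ⟨ε, hε, hball⟩ := Metric.mem_nhds_iff.1 hT
  filter_upwards [prod_mem_nhds hU (Metric.ball_mem_nhds 0 hε)] with ⟨b, t⟩ ⟨hb, ht⟩ s hs
  rw [Real.ball_eq_Ioo] at ht hball
  exact hUT ⟨hb, hball (ordConnected_Ioo.uIcc_subset (by simpa using hε) ht hs)⟩

variable [TopologicalSpace G] [IsTopologicalGroup G] [IsTopologicalAddGroup V]
  [ContinuousSMul ℝ V] [LocallyConvexSpace ℝ V]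

theorem tendsto_inv_pow_smul_taylorRemainder {X : ℝ → G} (hX0 : X 0 = 1)
    (hXadd : ∀ s t : ℝ, X (s + t) = X s * X t) (hXcont : Continuous X) {n : ℕ} {D : ℕ → G → V}
    (hDn : Continuous (D n))
    (hDder : ∀ j < n, ∀ g : G,
      Tendsto (fun t : ℝ => t⁻¹ • (D j (g * X t) - D j g)) (𝓝[≠] 0) (𝓝 (D (j + 1) g)))
    (g₀ : G) :
    Tendsto (fun p : G × ℝ => (p.2 ^ n)⁻¹ • taylorRemainder (fun j s => D j (p.1 * X s)) n p.2)
      (𝓝 (g₀, 0)) (𝓝 0) := by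
  have hcont : Continuous fun p : G × ℝ => D n (p.1 * X p.2) - D n p.1 := by fun_prop
  refine (nhds_hasBasis_absConvex_closed ℝ V).tendsto_right_iff.2 fun W ⟨hW, hWcl, hWabs⟩ => ?_
  have hsmall : ∀ᶠ p in 𝓝 (g₀, (0 : ℝ)), D n (p.1 * X p.2) - D n p.1 ∈ W :=
    hcont.continuousAt.preimage_mem_nhds (by simpa [hX0] using hW)
  filter_upwards [eventually_forall_uIcc_of_eventually_nhds_prod hsmall] with ⟨g, t⟩ hgt
  have hmem := taylorRemainder_mem_smul hWabs.2 hWcl hWabs.1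
    (fun j hj => hasSlopeLimit_comp_mul_oneParameter hXadd (hDder j hj) g)
    (by simpa [hX0] using hgt)
  rcases eq_or_ne t 0 with rfl | ht
  · simpa [taylorRemainder_apply_zero] using mem_of_mem_nhds hW
  · exact (mem_smul_set_iff_inv_smul_mem₀ (pow_ne_zero n ht) _ _).1 hmem

end OneParameterGroup

theorem taylor_formula_one_parameter_group_general
    {G V : Type*} [Group G] [TopologicalSpace G] [IsTopologicalGroup G]
    [AddCommGroup V] [Module ℝ V] [TopologicalSpace V] [IsTopologicalAddGroup V]
    [ContinuousSMul ℝ V] [LocallyConvexSpace ℝ V]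
    (φ : G → V)
    (X : ℝ → G) (hX0 : X 0 = 1) (hXadd : ∀ s t : ℝ, X (s + t) = X s * X t)
    (hXcont : Continuous X)
    (n : ℕ)
    (D : ℕ → G → V) (hD0 : D 0 = φ)
    (hDcont : ∀ j ≤ n, Continuous (D j))
    (hDder : ∀ j < n, ∀ g : G,
      Tendsto (fun t : ℝ => t⁻¹ • (D j (g * X t) - D j g)) (𝓝[≠] (0 : ℝ))
        (𝓝 (D (j + 1) g))) :
    ∃ χ : G × ℝ → V, Continuous χ ∧ (∀ g : G, χ (g, 0) = 0) ∧
      ∀ (g : G) (t : ℝ),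
        φ (g * X t) =
          (∑ j ∈ Finset.range (n + 1), (t ^ j / (Nat.factorial j : ℝ)) • D j g)
            + t ^ n • χ (g, t) := by
  subst hD0
  set R : G × ℝ → V := fun p => taylorRemainder (fun j s => D j (p.1 * X s)) n p.2
  have hR_eq : ∀ g t, R (g, t) =
      D 0 (g * X t) - ∑ j ∈ Finset.range (n + 1), (t ^ j / (j.factorial : ℝ)) • D j g := by
    simp [R, taylorRemainder, hX0]
  have hR_zero : ∀ g, R (g, 0) = 0 := fun g => taylorRemainder_apply_zero _ n
  have hR_cont : Continuous R := by
    rw [show R = fun p => _ from funext fun p => hR_eq p.1 p.2]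
    refine ((hDcont 0 n.zero_le).comp (by fun_prop)).sub (continuous_finsetSum _ fun j hj => ?_)
    have := hDcont j (Finset.mem_range_succ_iff.1 hj)
    fun_prop
  -- At `t = 0` the junk value `(0 ^ n)⁻¹` is harmless because `R (g, 0) = 0`.
  refine ⟨fun p => (p.2 ^ n)⁻¹ • R p, ?_, fun g => by simp [hR_zero], fun g t => ?_⟩
  · refine continuous_iff_continuousAt.2 fun ⟨g₀, t₀⟩ => ?_
    rcases eq_or_ne t₀ 0 with rfl | ht₀
    · show Tendsto _ _ (𝓝 ((0 ^ n)⁻¹ • R (g₀, 0)))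
      rw [hR_zero, smul_zero]
      exact tendsto_inv_pow_smul_taylorRemainder hX0 hXadd hXcont (hDcont n le_rfl) hDder g₀
    · exact ((continuousAt_snd.pow n).inv₀ (pow_ne_zero n ht₀)).smul hR_cont.continuousAt
  · dsimp only
    rcases eq_or_ne t 0 with rfl | ht
    · rw [hR_zero, smul_zero, smul_zero, add_zero, ← sub_eq_zero, ← hR_eq, hR_zero]
    · rw [smul_inv_smul₀ (pow_ne_zero n ht), hR_eq, add_sub_cancel]

/-- **Lemma 2.5(i) (Taylor formula with continuous remainder).**
Let `G` be a topological group, `V` a (Hausdorff) locally convex space, `φ : G → V`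
continuous and `X : ℝ → G` a continuous one-parameter group such that the iterated
right derivatives `D_X^j φ` (here given by the family `D j`, with `D 0 = φ`) exist for
`j ≤ n` and are continuous.  Then for every `g ∈ G` and `t ∈ ℝ`,
`φ(g X(t)) = ∑_{j=0}^n (tʲ/j!) (D_X^j φ)(g) + tⁿ χ(g,t)`,
where `χ : G × ℝ → V` is continuous with `χ(g,0) = 0` for all `g`. -/
theorem taylor_formula_one_parameter_group
    {G V : Type*} [Group G] [TopologicalSpace G] [IsTopologicalGroup G] [T2Space G]
    [AddCommGroup V] [Module ℝ V] [TopologicalSpace V] [IsTopologicalAddGroup V]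
    [ContinuousSMul ℝ V] [LocallyConvexSpace ℝ V] [T2Space V]
    (φ : G → V) (hφ : Continuous φ)
    (X : ℝ → G) (hX0 : X 0 = 1) (hXadd : ∀ s t : ℝ, X (s + t) = X s * X t)
    (hXcont : Continuous X)
    (n : ℕ) (hn : 1 ≤ n)
    (D : ℕ → G → V) (hD0 : D 0 = φ)
    (hDcont : ∀ j ≤ n, Continuous (D j))
    (hDder : ∀ j < n, ∀ g : G,
      Tendsto (fun t : ℝ => t⁻¹ • (D j (g * X t) - D j g)) (𝓝[≠] (0 : ℝ))
        (𝓝 (D (j + 1) g))) :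
    ∃ χ : G × ℝ → V, Continuous χ ∧ (∀ g : G, χ (g, 0) = 0) ∧
      ∀ (g : G) (t : ℝ),
        φ (g * X t) =
          (∑ j ∈ Finset.range (n + 1), (t ^ j / (Nat.factorial j : ℝ)) • D j g)
            + t ^ n • χ (g, t) :=
  taylor_formula_one_parameter_group_general φ X hX0 hXadd hXcont n D hD0 hDcont hDder
end

section
/- Let G be a topological group, V a locally convex space, φ : G → V continuous, and X₁, X₂ ∈ Hom(ℝ, G) continuous one-parameter groups such that D_{X₁}φ and D_{X₂}φ exist and are continuous on G. Then φ(gX₁(t)X₂(t)) = φ(g) + t((D_{X₁}φ)(g) + (D_{X₂}φ)(g)) + t·χ(g,t) for all (g,t) ∈ G × ℝ, where χ : G × ℝ → V is continuous with χ(g,0) = 0 for every g ∈ G. -/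
/-!
Along a one-parameter group the curve `s ↦ φ(g X(s))` is differentiable with derivative
`(D_X φ)(g X(s))`, so by the mean value theorem (Hahn–Banach plus the scalar mean value theorem)
each difference quotient `t⁻¹(φ(g X(t)) − φ(g))` lies in the closed convex hull of
`{(D_X φ)(g X(s)) : s between 0 and t}`. Continuity of `D_X φ` makes this hull shrink to
`(D_X φ)(g)` locally uniformly in `g`, so the difference quotient, extended by `(D_X φ)(g)` at
`t = 0`, is jointly continuous; the same holds with `g` replaced by any point depending
continuously on `(g, t)`. Splitting `φ(g X₁(t) X₂(t)) − φ(g)` into the increments along `X₁`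
from `g` and along `X₂` from `g X₁(t)` gives the remainder `χ`.
-/

open Set Filter Topology Function

theorem eventually_forall_mem_uIcc {P : Type*} [TopologicalSpace P] {p₀ : P} {a : ℝ}
    {S : P → ℝ → Prop} (h : ∀ᶠ q in 𝓝 (p₀, a), S q.1 q.2) :
    ∀ᶠ q in 𝓝 (p₀, a), ∀ s ∈ uIcc a q.2, S q.1 s := by
  rw [nhds_prod_eq] at h ⊢
  obtain ⟨pa, hpa, pb, hpb, hS⟩ := eventually_prod_iff.mp h
  obtain ⟨ε, hε, hball⟩ := Metric.eventually_nhds_iff.mp hpb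
  filter_upwards [hpa.prod_mk (Metric.ball_mem_nhds a hε)] with ⟨p, t⟩ ⟨hp, ht⟩ s hs
  refine hS hp (hball ((?_ : dist s a ≤ dist t a).trans_lt ht))
  simpa only [Real.dist_eq] using abs_sub_left_of_mem_uIcc hs

section LocallyConvex

variable {E : Type*} [AddCommGroup E] [Module ℝ E] [TopologicalSpace E] [IsTopologicalAddGroup E]
  [ContinuousSMul ℝ E] [LocallyConvexSpace ℝ E]

theorem Convex.slope_mem_closure_of_tendsto_slope {C : Set E} (hC : Convex ℝ C) {f f' : ℝ → E}
    {a b : ℝ} (hab : a ≠ b) (hf : ∀ x ∈ uIcc a b, Tendsto (slope f x) (𝓝[≠] x) (𝓝 (f' x)))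
    (hf'C : ∀ x ∈ uIcc a b, f' x ∈ C) :
    slope f a b ∈ closure C := by
  wlog hlt : a < b generalizing a b
  · rw [slope_comm]
    rw [uIcc_comm] at hf hf'C
    exact this hab.symm hf hf'C (hab.lt_or_gt.resolve_left hlt)
  by_contra hnot
  obtain ⟨ℓ, u, hℓC, huℓ⟩ := geometric_hahn_banach_closed_point hC.closure isClosed_closure hnot
  have hderiv : ∀ x ∈ Icc a b, HasDerivAt (ℓ ∘ f) (ℓ (f' x)) x := fun x hx => by
    rw [hasDerivAt_iff_tendsto_slope]
    convert (ℓ.continuous.tendsto _).comp (hf x (Icc_subset_uIcc hx)) using 1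
    exact funext (ℓ.toLinearMap.slope_comp f x)
  obtain ⟨c, hc, hℓc⟩ := exists_hasDerivAt_eq_slope (ℓ ∘ f) (ℓ ∘ f') hlt
    (fun x hx => (hderiv x hx).continuousAt.continuousWithinAt)
    (fun x hx => hderiv x (Ioo_subset_Icc_self hx))
  have hslope : ℓ (slope f a b) = ℓ (f' c) := by
    have hcomp : slope (ℓ ∘ f) a b = ℓ (slope f a b) := ℓ.toLinearMap.slope_comp f a b
    rw [← hcomp, slope_def_field]
    exact hℓc.symm
  have := hℓC _ (subset_closure (hf'C c (Icc_subset_uIcc (Ioo_subset_Icc_self hc))))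
  linarith

-- `update (slope f a) a v` stands in for `dslope`, which needs a normed codomain.
theorem continuous_update_slope_of_tendsto_slope {P : Type*} [TopologicalSpace P]
    {γ γ' : P → ℝ → E} (hγ : Continuous (uncurry γ)) (hγ' : Continuous (uncurry γ'))
    (hderiv : ∀ p x, Tendsto (slope (γ p) x) (𝓝[≠] x) (𝓝 (γ' p x))) (a : ℝ) :
    Continuous fun q : P × ℝ => update (slope (γ q.1) a) a (γ' q.1 a) q.2 := by
  refine continuous_iff_continuousAt.2 fun ⟨p₀, t₀⟩ => ?_
  rcases eq_or_ne t₀ a with rfl | ht₀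
  · rw [ContinuousAt, update_self]
    refine (closed_nhds_basis _).tendsto_right_iff.2 fun W ⟨hW, hWc⟩ => ?_
    obtain ⟨C, ⟨hC, hCconv⟩, hCW⟩ := (LocallyConvexSpace.convex_basis (𝕜 := ℝ) _).mem_iff.1 hW
    have hnear : ∀ᶠ q in 𝓝 (p₀, t₀), ∀ s ∈ uIcc t₀ q.2, γ' q.1 s ∈ C :=
      eventually_forall_mem_uIcc (S := fun p s => γ' p s ∈ C)
        (hγ'.continuousAt.eventually_mem hC)
    filter_upwards [hnear] with ⟨p, t⟩ hpt
    rcases eq_or_ne t t₀ with rfl | ht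
    · simpa using hCW (hpt t left_mem_uIcc)
    · rw [update_of_ne ht]
      exact closure_minimal hCW hWc
        (hCconv.slope_mem_closure_of_tendsto_slope ht.symm (fun x _ => hderiv p x) hpt)
  · have hslope : (fun q : P × ℝ => (q.2 - a)⁻¹ • (γ q.1 q.2 - γ q.1 a)) =ᶠ[𝓝 (p₀, t₀)]
        fun q => update (slope (γ q.1) a) a (γ' q.1 a) q.2 := by
      filter_upwards [continuous_snd.continuousAt.eventually_ne ht₀] with q hq
      rw [update_of_ne hq, slope_def_module]
    refine ContinuousAt.congr ?_ hslope
    exact ((continuous_snd.sub continuous_const).continuousAt.inv₀ (sub_ne_zero.2 ht₀)).smul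
      (hγ.sub (hγ.comp (continuous_fst.prodMk continuous_const))).continuousAt

end LocallyConvex

theorem sub_smul_update_slope {k E : Type*} [Field k] [DecidableEq k] [AddCommGroup E]
    [Module k E] (f : k → E) (a : k) (v : E) (t : k) :
    (t - a) • update (slope f a) a v t = f t - f a := by
  rcases eq_or_ne t a with rfl | ht
  · simp
  · rw [update_of_ne ht, sub_smul_slope, vsub_eq_sub]

theorem map_zero_eq_one_of_map_add {G : Type*} [Group G] {X : ℝ → G}
    (hX : ∀ s t, X (s + t) = X s * X t) : X 0 = 1 := by
  simpa using hX 0 0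

theorem tendsto_slope_comp_mul_oneParameter {G V : Type*} [Semigroup G] [AddCommGroup V]
    [Module ℝ V] [TopologicalSpace V] {φ D : G → V} {X : ℝ → G}
    (hX : ∀ s t, X (s + t) = X s * X t)
    (hDφ : ∀ g, Tendsto (fun t : ℝ => t⁻¹ • (φ (g * X t) - φ g)) (𝓝[≠] 0) (𝓝 (D g)))
    (g : G) (x : ℝ) :
    Tendsto (slope (fun s => φ (g * X s)) x) (𝓝[≠] x) (𝓝 (D (g * X x))) := by
  have hshift : 𝓝[≠] x = map (x + ·) (𝓝[≠] 0) := by simp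
  rw [hshift, tendsto_map'_iff]
  refine (hDφ (g * X x)).congr fun t => ?_
  simp [slope_def_module, hX, mul_assoc]

theorem continuous_update_slope_comp_mul_oneParameter {G V P : Type*} [Group G]
    [TopologicalSpace G] [ContinuousMul G] [AddCommGroup V] [Module ℝ V] [TopologicalSpace V]
    [IsTopologicalAddGroup V] [ContinuousSMul ℝ V] [LocallyConvexSpace ℝ V] [TopologicalSpace P]
    {φ D : G → V} {X : ℝ → G} (hφ : Continuous φ) (hD : Continuous D)
    (hX : ∀ s t, X (s + t) = X s * X t) (hXc : Continuous X)
    (hDφ : ∀ g, Tendsto (fun t : ℝ => t⁻¹ • (φ (g * X t) - φ g)) (𝓝[≠] 0) (𝓝 (D g)))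
    {b : P → G} (hb : Continuous b) :
    Continuous fun q : P × ℝ => update (slope (fun s => φ (b q.1 * X s)) 0) 0 (D (b q.1)) q.2 := by
  have h := continuous_update_slope_of_tendsto_slope (γ := fun p s => φ (b p * X s))
    (γ' := fun p s => D (b p * X s))
    (hφ.comp ((hb.comp continuous_fst).mul (hXc.comp continuous_snd)))
    (hD.comp ((hb.comp continuous_fst).mul (hXc.comp continuous_snd)))
    (fun p => tendsto_slope_comp_mul_oneParameter hX hDφ (b p)) 0
  simpa only [map_zero_eq_one_of_map_add hX, mul_one] using h

theorem first_order_expansion_product_of_one_parameter_groups_general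
    {G V : Type*} [Group G] [TopologicalSpace G] [IsTopologicalGroup G]
    [AddCommGroup V] [Module ℝ V] [TopologicalSpace V] [IsTopologicalAddGroup V]
    [ContinuousSMul ℝ V] [LocallyConvexSpace ℝ V]
    (φ : G → V) (hφ : Continuous φ)
    (X₁ X₂ : ℝ → G)
    (hX₁add : ∀ s t : ℝ, X₁ (s + t) = X₁ s * X₁ t)
    (hX₁cont : Continuous X₁)
    (hX₂add : ∀ s t : ℝ, X₂ (s + t) = X₂ s * X₂ t)
    (hX₂cont : Continuous X₂)
    (D₁ D₂ : G → V) (hD₁cont : Continuous D₁) (hD₂cont : Continuous D₂)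
    (hD₁ : ∀ g : G, Tendsto (fun t : ℝ => t⁻¹ • (φ (g * X₁ t) - φ g)) (𝓝[≠] (0 : ℝ))
      (𝓝 (D₁ g)))
    (hD₂ : ∀ g : G, Tendsto (fun t : ℝ => t⁻¹ • (φ (g * X₂ t) - φ g)) (𝓝[≠] (0 : ℝ))
      (𝓝 (D₂ g))) :
    ∃ χ : G × ℝ → V, Continuous χ ∧ (∀ g : G, χ (g, 0) = 0) ∧
      ∀ (g : G) (t : ℝ),
        φ (g * X₁ t * X₂ t) = φ g + t • (D₁ g + D₂ g) + t • χ (g, t) := by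
  have hX₁0 := map_zero_eq_one_of_map_add hX₁add
  have hX₂0 := map_zero_eq_one_of_map_add hX₂add
  have hF₁ := continuous_update_slope_comp_mul_oneParameter hφ hD₁cont hX₁add hX₁cont hD₁
    continuous_id
  have hF₂ := continuous_update_slope_comp_mul_oneParameter hφ hD₂cont hX₂add hX₂cont hD₂
    (b := fun p : G × ℝ => p.1 * X₁ p.2) (continuous_fst.mul (hX₁cont.comp continuous_snd))
  refine ⟨fun p => update (slope (fun s => φ (p.1 * X₁ s)) 0) 0 (D₁ p.1) p.2
      + update (slope (fun s => φ (p.1 * X₁ p.2 * X₂ s)) 0) 0 (D₂ (p.1 * X₁ p.2)) p.2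
      - (D₁ p.1 + D₂ p.1), ?_, fun g => by simp [hX₁0], fun g t => ?_⟩
  · exact (hF₁.add (hF₂.comp (continuous_id.prodMk continuous_snd))).sub
      ((hD₁cont.comp continuous_fst).add (hD₂cont.comp continuous_fst))
  · have h₁ := sub_smul_update_slope (fun s => φ (g * X₁ s)) 0 (D₁ g) t
    have h₂ := sub_smul_update_slope (fun s => φ (g * X₁ t * X₂ s)) 0 (D₂ (g * X₁ t)) t
    simp only [sub_zero, hX₁0, hX₂0, mul_one] at h₁ h₂
    simp only [smul_sub, smul_add, h₁, h₂]
    abel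

/-- **Lemma 2.5(ii).** Let `G` be a topological group, `V` a (Hausdorff) locally convex
space, `φ : G → V` continuous, and `X₁, X₂ : ℝ → G` continuous one-parameter groups such
that `D_{X₁}φ` and `D_{X₂}φ` exist everywhere and are continuous.  Then
`φ(g X₁(t) X₂(t)) = φ(g) + t((D_{X₁}φ)(g) + (D_{X₂}φ)(g)) + t χ(g,t)` for all `(g,t)`,
where `χ : G × ℝ → V` is continuous with `χ(g,0) = 0` for all `g ∈ G`. -/
theorem first_order_expansion_product_of_one_parameter_groups
    {G V : Type*} [Group G] [TopologicalSpace G] [IsTopologicalGroup G] [T2Space G]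
    [AddCommGroup V] [Module ℝ V] [TopologicalSpace V] [IsTopologicalAddGroup V]
    [ContinuousSMul ℝ V] [LocallyConvexSpace ℝ V] [T2Space V]
    (φ : G → V) (hφ : Continuous φ)
    (X₁ X₂ : ℝ → G)
    (hX₁0 : X₁ 0 = 1) (hX₁add : ∀ s t : ℝ, X₁ (s + t) = X₁ s * X₁ t)
    (hX₁cont : Continuous X₁)
    (hX₂0 : X₂ 0 = 1) (hX₂add : ∀ s t : ℝ, X₂ (s + t) = X₂ s * X₂ t)
    (hX₂cont : Continuous X₂)
    (D₁ D₂ : G → V) (hD₁cont : Continuous D₁) (hD₂cont : Continuous D₂)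
    (hD₁ : ∀ g : G, Tendsto (fun t : ℝ => t⁻¹ • (φ (g * X₁ t) - φ g)) (𝓝[≠] (0 : ℝ))
      (𝓝 (D₁ g)))
    (hD₂ : ∀ g : G, Tendsto (fun t : ℝ => t⁻¹ • (φ (g * X₂ t) - φ g)) (𝓝[≠] (0 : ℝ))
      (𝓝 (D₂ g))) :
    ∃ χ : G × ℝ → V, Continuous χ ∧ (∀ g : G, χ (g, 0) = 0) ∧
      ∀ (g : G) (t : ℝ),
        φ (g * X₁ t * X₂ t) = φ g + t • (D₁ g + D₂ g) + t • χ (g, t) :=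
  first_order_expansion_product_of_one_parameter_groups_general φ hφ X₁ X₂ hX₁add hX₁cont hX₂add
    hX₂cont D₁ D₂ hD₁cont hD₂cont hD₁ hD₂
end

section
/- Let G be a topological group, V a locally convex space, and X, X₁, X₂ continuous one-parameter groups in G with X(t) = limₙ (X₁(t/n)X₂(t/n))ⁿ uniformly on compact subsets of ℝ. Let φ : G → V be continuous such that D_{X₁}φ and D_{X₂}φ exist everywhere and are continuous. Then D_Xφ exists everywhere and D_Xφ = D_{X₁}φ + D_{X₂}φ. -/
/-!
By Hahn–Banach, the mean value theorem holds for curves in a locally convex space in the form: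
a difference quotient lies in every closed convex set that contains the derivative all along
the way. Over one Trotter step `h ↦ h X₁(r) X₂(r)` the difference quotient of `φ` therefore
splits into a part close to `D₁ g` and a part close to `D₂ g`, as long as the step stays in a
neighbourhood of `g` on which `D₁` and `D₂` vary little. Uniform Trotter convergence keeps the
whole product path `(X₁(t/n) X₂(t/n))ᵏ`, `k ≤ n`, close to `X(kt/n)`, hence near `g` for small
`t`. Averaging over the `n` steps and letting `n → ∞` gives the difference quotient along `X`.
-/

open Set Filter Topology Pointwise

theorem Convex.inv_smul_sub_mem_of_forall_sub_mem {V : Type*} [AddCommGroup V] [Module ℝ V]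
    {C : Set V} (hC : Convex ℝ C) {ψ : ℕ → V} {n : ℕ} (hn : n ≠ 0)
    (hψ : ∀ k < n, ψ (k + 1) - ψ k ∈ C) : (n : ℝ)⁻¹ • (ψ n - ψ 0) ∈ C := by
  rw [← Finset.sum_range_sub, Finset.smul_sum]
  refine hC.sum_mem (fun _ _ => by positivity) ?_ fun k hk => hψ k (Finset.mem_range.1 hk)
  rw [Finset.sum_const, Finset.card_range, nsmul_eq_mul, mul_inv_cancel₀ (Nat.cast_ne_zero.2 hn)]

section LocallyConvex

variable {V : Type*} [AddCommGroup V] [Module ℝ V] [TopologicalSpace V] [IsTopologicalAddGroup V]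
  [ContinuousSMul ℝ V] [LocallyConvexSpace ℝ V]

theorem nhds_basis_isClosed_convex (x : V) :
    (𝓝 x).HasBasis (fun s => s ∈ 𝓝 x ∧ IsClosed s ∧ Convex ℝ s) id := by
  refine (closed_nhds_basis x).to_hasBasis (fun W ⟨hW, hWc⟩ => ?_)
    fun s hs => ⟨s, ⟨hs.1, hs.2.1⟩, le_rfl⟩
  obtain ⟨C, ⟨hC, hCconv⟩, hCW⟩ := (LocallyConvexSpace.convex_basis (𝕜 := ℝ) x).mem_iff.1 hW
  exact ⟨closure C, ⟨mem_of_superset hC subset_closure, isClosed_closure, hCconv.closure⟩,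
    hWc.closure_subset_iff.2 hCW⟩

theorem exists_isClosed_convex_add_subset {a b : V} {C : Set V} (hC : C ∈ 𝓝 (a + b)) :
    ∃ C₁ C₂ : Set V, (C₁ ∈ 𝓝 a ∧ IsClosed C₁ ∧ Convex ℝ C₁) ∧
      (C₂ ∈ 𝓝 b ∧ IsClosed C₂ ∧ Convex ℝ C₂) ∧ C₁ + C₂ ⊆ C := by
  rw [nhds_add, Filter.mem_add] at hC
  obtain ⟨t₁, ht₁, t₂, ht₂, hsub⟩ := hC
  obtain ⟨C₁, hC₁, hC₁t⟩ := (nhds_basis_isClosed_convex a).mem_iff.1 ht₁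
  obtain ⟨C₂, hC₂, hC₂t⟩ := (nhds_basis_isClosed_convex b).mem_iff.1 ht₂
  exact ⟨C₁, C₂, hC₁, hC₂, (add_subset_add hC₁t hC₂t).trans hsub⟩

theorem Convex.slope_mem_of_tendsto_slope {F F' : ℝ → V} {C : Set V} (hC : Convex ℝ C)
    (hCc : IsClosed C) {a b : ℝ} (hab : a ≠ b)
    (hF : ∀ s ∈ uIcc a b, Tendsto (slope F s) (𝓝[≠] s) (𝓝 (F' s)))
    (hF' : ∀ s ∈ uIcc a b, F' s ∈ C) : slope F a b ∈ C := by
  wlog hlt : a < b generalizing a b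
  · rw [uIcc_comm] at hF hF'
    rw [slope_comm]
    exact this hab.symm hF hF' (lt_of_le_of_ne (not_lt.1 hlt) hab.symm)
  by_contra hnotin
  -- separate the slope from `C` by a functional and apply the real mean value theorem to it
  obtain ⟨f, u, hfC, hfu⟩ := geometric_hahn_banach_closed_point hC hCc hnotin
  have hderiv : ∀ s ∈ Icc a b, HasDerivAt (f ∘ F) (f (F' s)) s := fun s hs => by
    rw [hasDerivAt_iff_tendsto_slope]
    convert (f.continuous.tendsto _).comp (hF s (Icc_subset_uIcc hs)) using 1
    funext y
    exact f.toLinearMap.slope_comp F s y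
  obtain ⟨c, hc, hfc⟩ := exists_hasDerivAt_eq_slope (f ∘ F) (fun s => f (F' s)) hlt
    (fun s hs => (hderiv s hs).continuousAt.continuousWithinAt)
    (fun s hs => hderiv s (Ioo_subset_Icc_self hs))
  have hslope : f (slope F a b) = f (F' c) := by
    rw [hfc, ← slope_def_field]
    exact (f.toLinearMap.slope_comp F a b).symm
  linarith [hfC _ (hF' c (Icc_subset_uIcc (Ioo_subset_Icc_self hc)))]

end LocallyConvex

section TrotterSum

variable {G : Type*} [Group G] [TopologicalSpace G]

/-- `X = X₁ + X₂` in the sense of the Trotter product formula. -/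
def IsTrotterSum (X X₁ X₂ : ℝ → G) : Prop :=
  ∀ K : Set ℝ, IsCompact K → ∀ U ∈ 𝓝 (1 : G), ∃ N : ℕ, ∀ n ≥ N, ∀ t ∈ K,
    (X t)⁻¹ * (X₁ (t / n) * X₂ (t / n)) ^ n ∈ U

variable {X X₁ X₂ : ℝ → G}

theorem IsTrotterSum.tendsto_pow [ContinuousMul G] (hX : IsTrotterSum X X₁ X₂) (t : ℝ) :
    Tendsto (fun n : ℕ => (X₁ (t / n) * X₂ (t / n)) ^ n) atTop (𝓝 (X t)) := by
  have h : Tendsto (fun n : ℕ => (X t)⁻¹ * (X₁ (t / n) * X₂ (t / n)) ^ n) atTop (𝓝 1) :=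
    fun U hU => by
      obtain ⟨N, hN⟩ := hX {t} isCompact_singleton U hU
      exact mem_atTop_sets.2 ⟨N, fun n hn => hN n hn t rfl⟩
  simpa using h.const_mul (X t)

variable [IsTopologicalGroup G]

theorem eventually_forall_uIcc_mem_of_mem_nhds_one (hX₁0 : X₁ 0 = 1) (hX₂0 : X₂ 0 = 1)
    (hX₁cont : Continuous X₁) (hX₂cont : Continuous X₂) {W : Set G} (hW : W ∈ 𝓝 1) :
    ∀ᶠ r in 𝓝 (0 : ℝ), ∀ s ∈ uIcc 0 r, X₁ s ∈ W ∧ X₁ r * X₂ s ∈ W := by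
  have hc : Continuous fun p : ℝ × ℝ => X₁ p.1 * X₂ p.2 := by fun_prop
  obtain ⟨η, hη, hηW⟩ := Metric.eventually_nhds_iff_ball.1
    (hc.continuousAt.eventually_mem (x := 0) (by simpa [hX₁0, hX₂0] using hW))
  filter_upwards [Metric.ball_mem_nhds 0 hη] with r hr s hs
  have hsr : |s| ≤ |r| := by simpa using abs_sub_left_of_mem_uIcc hs
  replace hr : |r| < η := by simpa using hr
  constructor
  · simpa [hX₂0] using hηW (s, 0) (by simpa [Prod.dist_eq] using hsr.trans_lt hr)
  · exact hηW (r, s) (by simpa [Prod.dist_eq] using ⟨hr, hsr.trans_lt hr⟩)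

theorem IsTrotterSum.eventually_inv_mul_pow_mem (hX : IsTrotterSum X X₁ X₂) (hX0 : X 0 = 1)
    (hX₁0 : X₁ 0 = 1) (hX₂0 : X₂ 0 = 1) (hXcont : Continuous X) (hX₁cont : Continuous X₁)
    (hX₂cont : Continuous X₂) (δ : ℝ) {U : Set G} (hU : U ∈ 𝓝 1) :
    ∀ᶠ r in 𝓝 (0 : ℝ), ∀ k : ℕ, |(k : ℝ) * r| ≤ δ → (X (k * r))⁻¹ * (X₁ r * X₂ r) ^ k ∈ U := by
  obtain ⟨N, hN⟩ := hX (Icc (-δ) δ) isCompact_Icc U hU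
  -- the finitely many `k ≤ N` not covered by the Trotter limit are handled by continuity in `r`
  have hsmall : ∀ᶠ r in 𝓝 (0 : ℝ), ∀ k ∈ Finset.range (N + 1),
      (X (k * r))⁻¹ * (X₁ r * X₂ r) ^ k ∈ U := by
    refine (eventually_all_finset _).2 fun k _ => ?_
    have hc : Continuous fun r : ℝ => (X (k * r))⁻¹ * (X₁ r * X₂ r) ^ k := by fun_prop
    exact hc.continuousAt.eventually_mem (by simpa [hX0, hX₁0, hX₂0] using hU)
  filter_upwards [hsmall] with r hr k hk
  rcases lt_or_ge k (N + 1) with hkN | hkN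
  · exact hr k (Finset.mem_range.2 hkN)
  · have hk0 : (k : ℝ) ≠ 0 := Nat.cast_ne_zero.2 (by omega)
    simpa [mul_div_cancel_left₀ r hk0] using hN k (by omega) (k * r) (abs_le.1 hk)

theorem IsTrotterSum.exists_forall_eventually_path_mem (hX : IsTrotterSum X X₁ X₂)
    (hX0 : X 0 = 1) (hX₁0 : X₁ 0 = 1) (hX₂0 : X₂ 0 = 1) (hXcont : Continuous X)
    (hX₁cont : Continuous X₁) (hX₂cont : Continuous X₂) {g : G} {S : Set G} (hS : S ∈ 𝓝 g) :
    ∃ δ > 0, ∀ t : ℝ, |t| < δ → ∀ᶠ n : ℕ in atTop, ∀ k < n, ∀ s ∈ uIcc 0 (t / n),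
      g * (X₁ (t / n) * X₂ (t / n)) ^ k * X₁ s ∈ S ∧
      g * (X₁ (t / n) * X₂ (t / n)) ^ k * X₁ (t / n) * X₂ s ∈ S := by
  have hcont : Tendsto (fun p : ℝ × G × G => g * X p.1 * p.2.1 * p.2.2)
      (𝓝 0 ×ˢ (𝓝 1 ×ˢ 𝓝 1)) (𝓝 g) := by
    rw [← nhds_prod_eq, ← nhds_prod_eq]
    convert (by fun_prop : Continuous fun p : ℝ × G × G => g * X p.1 * p.2.1 * p.2.2).tendsto
      (0, 1, 1)
    simp [hX0]
  obtain ⟨A, hA, B, hB, hAB⟩ := mem_prod_iff.1 (hcont hS)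
  obtain ⟨U, hU, W, hW, hUW⟩ := mem_prod_iff.1 hB
  obtain ⟨δ, hδ, hδA⟩ := Metric.mem_nhds_iff.1 hA
  have hmemS : ∀ (a : ℝ) (u w : G), |a| < δ → u ∈ U → w ∈ W → g * X a * u * w ∈ S :=
    fun a u w ha hu hw => hAB (show (a, u, w) ∈ A ×ˢ B from
      ⟨hδA (by simpa using ha), hUW ⟨hu, hw⟩⟩)
  refine ⟨δ, hδ, fun t ht => ?_⟩
  have hr : Tendsto (fun n : ℕ => t / n) atTop (𝓝 0) := tendsto_const_div_atTop_nhds_zero_nat t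
  filter_upwards
    [hr.eventually (hX.eventually_inv_mul_pow_mem hX0 hX₁0 hX₂0 hXcont hX₁cont hX₂cont δ hU),
      hr.eventually (eventually_forall_uIcc_mem_of_mem_nhds_one hX₁0 hX₂0 hX₁cont hX₂cont hW)]
    with n hUn hWn k hk s hs
  have hkt : |(k : ℝ) * (t / n)| < δ := by
    have hn : (0 : ℝ) < n := by exact_mod_cast k.zero_le.trans_lt hk
    calc |(k : ℝ) * (t / n)| = k / n * |t| := by
          rw [abs_mul, abs_div, Nat.abs_cast, Nat.abs_cast]; ring
      _ ≤ 1 * |t| := by gcongr; exact (div_le_one hn).2 (by exact_mod_cast hk.le)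
      _ < δ := by linarith
  obtain ⟨hs₁, hs₂⟩ := hWn s hs
  exact ⟨by simpa [mul_assoc] using hmemS _ _ _ hkt (hUn k hkt.le) hs₁,
    by simpa [mul_assoc] using hmemS _ _ _ hkt (hUn k hkt.le) hs₂⟩

end TrotterSum

section DerivAlong

variable {G V : Type*} [Group G] [AddCommGroup V] [Module ℝ V] [TopologicalSpace V]

/-- `D = D_Y φ`, the derivative of `φ` along right translation by `Y`. -/
def HasDerivAlong (φ : G → V) (Y : ℝ → G) (D : G → V) : Prop :=
  ∀ g : G, Tendsto (fun t : ℝ => t⁻¹ • (φ (g * Y t) - φ g)) (𝓝[≠] 0) (𝓝 (D g))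

variable {φ : G → V}

theorem HasDerivAlong.tendsto_slope {Y : ℝ → G} {D : G → V}
    (hY : ∀ s t : ℝ, Y (s + t) = Y s * Y t) (hD : HasDerivAlong φ Y D) (h : G) (s : ℝ) :
    Tendsto (slope (fun u => φ (h * Y u)) s) (𝓝[≠] s) (𝓝 (D (h * Y s))) := by
  have hshift : Tendsto (· - s) (𝓝[≠] s) (𝓝[≠] 0) := by
    have := (Filter.map_subRight_nhdsNE (c := s) (a := s)).le
    rwa [sub_self] at this
  refine ((hD (h * Y s)).comp hshift).congr fun u => ?_
  simp only [Function.comp_apply, slope_def_module, mul_assoc, ← hY, add_sub_cancel]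

variable [IsTopologicalAddGroup V] [ContinuousSMul ℝ V] [LocallyConvexSpace ℝ V]

theorem HasDerivAlong.inv_smul_sub_mem {Y : ℝ → G} {D : G → V} (hY0 : Y 0 = 1)
    (hY : ∀ s t : ℝ, Y (s + t) = Y s * Y t) (hD : HasDerivAlong φ Y D) {C : Set V}
    (hC : Convex ℝ C) (hCc : IsClosed C) {h : G} {r : ℝ} (hr : r ≠ 0)
    (hmem : ∀ s ∈ uIcc 0 r, D (h * Y s) ∈ C) : r⁻¹ • (φ (h * Y r) - φ h) ∈ C := by
  simpa [slope_def_module, hY0] using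
    hC.slope_mem_of_tendsto_slope hCc hr.symm (fun s _ => hD.tendsto_slope hY h s) hmem

variable {X₁ X₂ : ℝ → G} {D₁ D₂ : G → V} {C₁ C₂ : Set V}

theorem inv_smul_sub_mem_add_of_hasDerivAlong (hX₁0 : X₁ 0 = 1)
    (hX₁add : ∀ s t : ℝ, X₁ (s + t) = X₁ s * X₁ t) (hX₂0 : X₂ 0 = 1)
    (hX₂add : ∀ s t : ℝ, X₂ (s + t) = X₂ s * X₂ t) (hD₁ : HasDerivAlong φ X₁ D₁)
    (hD₂ : HasDerivAlong φ X₂ D₂) (hC₁ : Convex ℝ C₁) (hC₁c : IsClosed C₁) (hC₂ : Convex ℝ C₂)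
    (hC₂c : IsClosed C₂) {h : G} {r : ℝ} (hr : r ≠ 0)
    (h₁ : ∀ s ∈ uIcc 0 r, D₁ (h * X₁ s) ∈ C₁) (h₂ : ∀ s ∈ uIcc 0 r, D₂ (h * X₁ r * X₂ s) ∈ C₂) :
    r⁻¹ • (φ (h * (X₁ r * X₂ r)) - φ h) ∈ C₁ + C₂ := by
  rw [← mul_assoc, ← sub_add_sub_cancel' (φ (h * X₁ r)), smul_add]
  exact Set.add_mem_add (hD₁.inv_smul_sub_mem hX₁0 hX₁add hC₁ hC₁c hr h₁)
    (hD₂.inv_smul_sub_mem hX₂0 hX₂add hC₂ hC₂c hr h₂)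

theorem inv_smul_sub_trotter_pow_mem_add (hX₁0 : X₁ 0 = 1)
    (hX₁add : ∀ s t : ℝ, X₁ (s + t) = X₁ s * X₁ t) (hX₂0 : X₂ 0 = 1)
    (hX₂add : ∀ s t : ℝ, X₂ (s + t) = X₂ s * X₂ t) (hD₁ : HasDerivAlong φ X₁ D₁)
    (hD₂ : HasDerivAlong φ X₂ D₂) (hC₁ : Convex ℝ C₁) (hC₁c : IsClosed C₁) (hC₂ : Convex ℝ C₂)
    (hC₂c : IsClosed C₂) {g : G} {t : ℝ} (ht : t ≠ 0) {n : ℕ} (hn : n ≠ 0)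
    (hpath : ∀ k < n, ∀ s ∈ uIcc 0 (t / n),
      D₁ (g * (X₁ (t / n) * X₂ (t / n)) ^ k * X₁ s) ∈ C₁ ∧
      D₂ (g * (X₁ (t / n) * X₂ (t / n)) ^ k * X₁ (t / n) * X₂ s) ∈ C₂) :
    t⁻¹ • (φ (g * (X₁ (t / n) * X₂ (t / n)) ^ n) - φ g) ∈ C₁ + C₂ := by
  set r := t / n with hr_def
  have hr : r ≠ 0 := div_ne_zero ht (Nat.cast_ne_zero.2 hn)
  -- the increments over the `n` Trotter steps average to the difference quotient over `[0, t]`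
  have havg := (hC₁.add hC₂).inv_smul_sub_mem_of_forall_sub_mem hn
    (ψ := fun k => r⁻¹ • φ (g * (X₁ r * X₂ r) ^ k)) fun k hk => by
      rw [← smul_sub, pow_succ, ← mul_assoc]
      exact inv_smul_sub_mem_add_of_hasDerivAlong hX₁0 hX₁add hX₂0 hX₂add hD₁ hD₂ hC₁ hC₁c hC₂
        hC₂c hr (fun s hs => (hpath k hk s hs).1) (fun s hs => (hpath k hk s hs).2)
  rwa [← smul_sub, smul_smul, pow_zero, mul_one, ← mul_inv, hr_def,
    mul_div_cancel₀ t (Nat.cast_ne_zero.2 hn)] at havg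

end DerivAlong

theorem trotter_sum_derivative_general
    {G V : Type*} [Group G] [TopologicalSpace G] [IsTopologicalGroup G]
    [AddCommGroup V] [Module ℝ V] [TopologicalSpace V] [IsTopologicalAddGroup V]
    [ContinuousSMul ℝ V] [LocallyConvexSpace ℝ V]
    (X X₁ X₂ : ℝ → G)
    (hX0 : X 0 = 1) (hXcont : Continuous X)
    (hX₁0 : X₁ 0 = 1) (hX₁add : ∀ s t : ℝ, X₁ (s + t) = X₁ s * X₁ t)
    (hX₁cont : Continuous X₁)
    (hX₂0 : X₂ 0 = 1) (hX₂add : ∀ s t : ℝ, X₂ (s + t) = X₂ s * X₂ t)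
    (hX₂cont : Continuous X₂)
    (htrotter : ∀ K : Set ℝ, IsCompact K → ∀ U ∈ 𝓝 (1 : G), ∃ N : ℕ, ∀ n ≥ N, ∀ t ∈ K,
      (X t)⁻¹ * (X₁ (t / n) * X₂ (t / n)) ^ n ∈ U)
    (φ : G → V) (hφ : Continuous φ)
    (D₁ D₂ : G → V) (hD₁cont : Continuous D₁) (hD₂cont : Continuous D₂)
    (hD₁ : ∀ g : G, Tendsto (fun t : ℝ => t⁻¹ • (φ (g * X₁ t) - φ g)) (𝓝[≠] (0 : ℝ))
      (𝓝 (D₁ g)))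
    (hD₂ : ∀ g : G, Tendsto (fun t : ℝ => t⁻¹ • (φ (g * X₂ t) - φ g)) (𝓝[≠] (0 : ℝ))
      (𝓝 (D₂ g))) :
    ∀ g : G, Tendsto (fun t : ℝ => t⁻¹ • (φ (g * X t) - φ g)) (𝓝[≠] (0 : ℝ))
      (𝓝 (D₁ g + D₂ g)) := by
  intro g
  refine (closed_nhds_basis _).tendsto_right_iff.2 fun C ⟨hC, hCc⟩ => ?_
  obtain ⟨C₁, C₂, ⟨hC₁, hC₁c, hC₁conv⟩, ⟨hC₂, hC₂c, hC₂conv⟩, hsub⟩ :=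
    exists_isClosed_convex_add_subset hC
  have hS : D₁ ⁻¹' C₁ ∩ D₂ ⁻¹' C₂ ∈ 𝓝 g :=
    inter_mem (hD₁cont.continuousAt hC₁) (hD₂cont.continuousAt hC₂)
  obtain ⟨δ, hδ, hpath⟩ := IsTrotterSum.exists_forall_eventually_path_mem htrotter hX0 hX₁0 hX₂0
    hXcont hX₁cont hX₂cont hS
  filter_upwards [self_mem_nhdsWithin, nhdsWithin_le_nhds (Metric.ball_mem_nhds 0 hδ)]
    with t (ht : t ≠ 0) htδ
  have hlim : Tendsto (fun n : ℕ => t⁻¹ • (φ (g * (X₁ (t / n) * X₂ (t / n)) ^ n) - φ g)) atTop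
      (𝓝 (t⁻¹ • (φ (g * X t) - φ g))) :=
    ((by fun_prop : Continuous fun x => t⁻¹ • (φ (g * x) - φ g)).tendsto _).comp
      (IsTrotterSum.tendsto_pow htrotter t)
  refine hCc.mem_of_tendsto hlim ?_
  filter_upwards [hpath t (by simpa using htδ), eventually_ne_atTop 0] with n hn hn0
  exact hsub (inv_smul_sub_trotter_pow_mem_add hX₁0 hX₁add hX₂0 hX₂add hD₁ hD₂ hC₁conv hC₁c
    hC₂conv hC₂c ht hn0 fun k hk s hs => ⟨(hn k hk s hs).1.1, (hn k hk s hs).2.2⟩)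

/-- **Lemma 2.6.** Let `G` be a topological group, `V` a (Hausdorff) locally convex
space, and `X, X₁, X₂` continuous one-parameter groups of `G` with `X = X₁ + X₂` in the
Trotter sense: `X(t) = limₙ (X₁(t/n) X₂(t/n))ⁿ` uniformly on compact subsets of `ℝ`.
If `φ : G → V` is continuous and `D_{X₁}φ`, `D_{X₂}φ` exist everywhere and are
continuous, then `D_Xφ` exists everywhere and `D_Xφ = D_{X₁}φ + D_{X₂}φ`. -/
theorem trotter_sum_derivative
    {G V : Type*} [Group G] [TopologicalSpace G] [IsTopologicalGroup G] [T2Space G]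
    [AddCommGroup V] [Module ℝ V] [TopologicalSpace V] [IsTopologicalAddGroup V]
    [ContinuousSMul ℝ V] [LocallyConvexSpace ℝ V] [T2Space V]
    (X X₁ X₂ : ℝ → G)
    (hX0 : X 0 = 1) (hXadd : ∀ s t : ℝ, X (s + t) = X s * X t) (hXcont : Continuous X)
    (hX₁0 : X₁ 0 = 1) (hX₁add : ∀ s t : ℝ, X₁ (s + t) = X₁ s * X₁ t)
    (hX₁cont : Continuous X₁)
    (hX₂0 : X₂ 0 = 1) (hX₂add : ∀ s t : ℝ, X₂ (s + t) = X₂ s * X₂ t)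
    (hX₂cont : Continuous X₂)
    (htrotter : ∀ K : Set ℝ, IsCompact K → ∀ U ∈ 𝓝 (1 : G), ∃ N : ℕ, ∀ n ≥ N, ∀ t ∈ K,
      (X t)⁻¹ * (X₁ (t / n) * X₂ (t / n)) ^ n ∈ U)
    (φ : G → V) (hφ : Continuous φ)
    (D₁ D₂ : G → V) (hD₁cont : Continuous D₁) (hD₂cont : Continuous D₂)
    (hD₁ : ∀ g : G, Tendsto (fun t : ℝ => t⁻¹ • (φ (g * X₁ t) - φ g)) (𝓝[≠] (0 : ℝ))
      (𝓝 (D₁ g)))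
    (hD₂ : ∀ g : G, Tendsto (fun t : ℝ => t⁻¹ • (φ (g * X₂ t) - φ g)) (𝓝[≠] (0 : ℝ))
      (𝓝 (D₂ g))) :
    ∀ g : G, Tendsto (fun t : ℝ => t⁻¹ • (φ (g * X t) - φ g)) (𝓝[≠] (0 : ℝ))
      (𝓝 (D₁ g + D₂ g)) :=
  trotter_sum_derivative_general X X₁ X₂ hX0 hXcont hX₁0 hX₁add hX₁cont hX₂0 hX₂add hX₂cont htrotter
    φ hφ D₁ D₂ hD₁cont hD₂cont hD₁ hD₂
end

section
/- Let G be a Fréchet–Lie group with the Trotter property and (π, V) a continuous representation of G on a metrizable locally convex space V. Then for each v ∈ Dⁿ (the space of vectors v such that all iterated derived operators up to order n are defined on v), the map ω_vⁿ : 𝔤ⁿ → V, (x₁, …, xₙ) ↦ d̄π(x₁)⋯d̄π(xₙ)v, is continuous and n-linear. (The proof of continuity uses a Baire category argument: ω_vⁿ is a pointwise limit of continuous maps on the Baire space 𝔤ⁿ, hence has a point of continuity, and multilinearity upgrades this to global continuity.) -/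
open Set Filter Topology

/-- A Lie group modeled on a locally convex space, recorded through its underlying
topological group together with its Lie algebra `g` and its (smooth) exponential
function. -/
structure ExpLieGroup (G : Type*) [Group G] [TopologicalSpace G]
    (g : Type*) [AddCommGroup g] [Module ℝ g] [TopologicalSpace g] where
  exp : g → G
  exp_zero : exp 0 = 1
  exp_add : ∀ (x : g) (s t : ℝ), exp ((s + t) • x) = exp (s • x) * exp (t • x)
  continuous_exp : Continuous exp

/-- The Trotter property. -/
def ExpLieGroup.HasTrotter {G : Type*} [Group G] [TopologicalSpace G]
    {g : Type*} [AddCommGroup g] [Module ℝ g] [TopologicalSpace g]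
    (E : ExpLieGroup G g) : Prop :=
  ∀ x y : g, ∀ K : Set ℝ, IsCompact K → ∀ U ∈ 𝓝 (1 : G), ∃ N : ℕ, ∀ n ≥ N, ∀ t ∈ K,
    (E.exp (t • (x + y)))⁻¹ * (E.exp ((t / n) • x) * E.exp ((t / n) • y)) ^ n ∈ U

/-!
The map `ω_vⁿ⁺¹ (x, xs) = d̄π(x) (ω_vⁿ xs)` is linear in `xs` because `d̄π(x)` is linear on its
domain, and linear in `x` because `x ↦ d̄π(x) w` is: homogeneity is a reparametrisation, and
additivity comes from the Trotter formula. With `g_n = exp(t x / n) exp(t y / n)` and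
`b_n = (t / n)⁻¹ (π(g_n) w - w) → d̄π(x) w + d̄π(y) w`, telescoping gives
`t⁻¹ (π(g_nⁿ) w - w) = n⁻¹ ∑_{k<n} π(g_nᵏ) b_n`. For small `t` all the `g_nᵏ` with `k ≤ n` stay
near `1`, so these averages stay in a given convex neighbourhood of `d̄π(x) w + d̄π(y) w`, and so
does their limit `t⁻¹ (π(exp t(x + y)) w - w)`.

`ω_vⁿ⁺¹` is the pointwise limit of the continuous maps
`(x, xs) ↦ k (π(exp(x / k)) (ω_vⁿ xs) - ω_vⁿ xs)` on the Baire space `𝔤ⁿ⁺¹`, hence continuous at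
some point. A multilinear map continuous at one point is continuous at `0` (zero one coordinate
at a time), and then everywhere (rescale the coordinates).
-/

open Function
open scoped Finset

section Baire

variable {X Y : Type*} [TopologicalSpace X]

theorem isOpen_setOf_oscillation_lt [PseudoEMetricSpace Y] (F : X → Y) (ε : ENNReal) :
    IsOpen {x | oscillation F x < ε} := by
  refine isOpen_iff_mem_nhds.2 fun x hx => ?_
  change oscillation F x < ε at hx
  simp only [oscillation, iInf_lt_iff, exists_prop] at hx
  obtain ⟨S, hS, hSε⟩ := hx
  filter_upwards [eventually_eventually_nhds.2 hS] with y (hy : S ∈ (𝓝 y).map F)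
  exact (biInf_le Metric.ediam hy).trans_lt hSε

variable [BaireSpace X] [PseudoMetricSpace Y] {f : ℕ → X → Y} {F : X → Y}

theorem dense_setOf_oscillation_lt_of_tendsto (hf : ∀ k, Continuous (f k))
    (hF : ∀ x, Tendsto (fun k => f k x) atTop (𝓝 (F x))) {ε : ℝ} (hε : 0 < ε) :
    Dense {x | oscillation F x < ENNReal.ofReal ε} := by
  set δ := ε / 5
  set A : ℕ → Set X := fun N => {x | ∀ m ≥ N, dist (f m x) (f N x) ≤ δ}
  have hA_closed : ∀ N, IsClosed (A N) := fun N => by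
    simp only [A, ofPred_forall]
    exact isClosed_iInter fun m => isClosed_iInter fun _ =>
      isClosed_le ((hf m).dist (hf N)) continuous_const
  have hA_cover : ⋃ N, A N = univ := by
    refine eq_univ_of_forall fun x => mem_iUnion.2 ?_
    obtain ⟨N, hN⟩ := Metric.cauchySeq_iff'.1 (hF x).cauchySeq δ (by positivity)
    exact ⟨N, fun m hm => (hN m hm).le⟩
  have hF_near : ∀ N, ∀ x ∈ A N, dist (F x) (f N x) ≤ δ := fun N x hx =>
    le_of_tendsto ((hF x).dist tendsto_const_nhds) (eventually_atTop.2 ⟨N, hx⟩)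
  refine (dense_iUnion_interior_of_closed hA_closed hA_cover).mono
    (iUnion_subset fun N x hx => ?_)
  set U := interior (A N) ∩ {y | dist (f N y) (f N x) < δ}
  have hU : U ∈ 𝓝 x := inter_mem (isOpen_interior.mem_nhds hx)
    (((hf N).dist continuous_const).continuousAt.preimage_mem_nhds
      (Iio_mem_nhds (by simpa [δ] using hε)))
  have hdist : ∀ y ∈ U, ∀ z ∈ U, dist (F y) (F z) ≤ 4 * δ := by
    rintro y ⟨hyA, hy⟩ z ⟨hzA, hz⟩
    calc dist (F y) (F z) ≤ dist (F y) (f N y) + dist (f N y) (f N z) + dist (f N z) (F z) :=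
          dist_triangle4 _ _ _ _
      _ ≤ δ + (δ + δ) + δ := by
          gcongr
          · exact hF_near N y (interior_subset hyA)
          · exact (dist_triangle_right _ _ (f N x)).trans (add_le_add hy.le hz.le)
          · rw [dist_comm]; exact hF_near N z (interior_subset hzA)
      _ = 4 * δ := by ring
  calc oscillation F x ≤ Metric.ediam (F '' U) := biInf_le _ (image_mem_map hU)
    _ ≤ ENNReal.ofReal (4 * δ) := Metric.ediam_le_of_forall_dist_le (by simpa using hdist)
    _ < ENNReal.ofReal ε := (ENNReal.ofReal_lt_ofReal_iff hε).2 (by simp only [δ]; linarith)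

theorem dense_setOf_continuousAt_of_tendsto (hf : ∀ k, Continuous (f k))
    (hF : ∀ x, Tendsto (fun k => f k x) atTop (𝓝 (F x))) :
    Dense {x | ContinuousAt F x} := by
  refine (dense_iInter_of_isOpen (fun n : ℕ => isOpen_setOf_oscillation_lt F _)
    fun n => dense_setOf_oscillation_lt_of_tendsto hf hF (Nat.one_div_pos_of_nat (n := n))).mono
    fun x hx => ?_
  have hlim : Tendsto (fun n : ℕ => ENNReal.ofReal (1 / (n + 1))) atTop (𝓝 0) := by
    simpa using ENNReal.tendsto_ofReal tendsto_one_div_add_atTop_nhds_zero_nat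
  change ContinuousAt F x
  rw [← Oscillation.eq_zero_iff_continuousAt, ← nonpos_iff_eq_zero]
  exact ge_of_tendsto' hlim fun n => (mem_iInter.1 hx n).le

end Baire

namespace MultilinearMap

variable {R 𝕜 ι F : Type*} {E : ι → Type*} [DecidableEq ι]
  [∀ i, AddCommGroup (E i)] [∀ i, TopologicalSpace (E i)] [AddCommGroup F] [TopologicalSpace F]

theorem continuousAt_update_zero [Ring R] [∀ i, Module R (E i)] [Module R F]
    [∀ i, ContinuousAdd (E i)] [IsTopologicalAddGroup F] (f : MultilinearMap R E F)
    {x : ∀ i, E i} (hf : ContinuousAt f x) (i : ι) : ContinuousAt f (update x i 0) := by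
  have hsplit : ∀ m, f m = f (update m i (m i + x i)) - f (update m i (x i)) := fun m => by
    rw [← f.map_update_sub, add_sub_cancel_right, update_eq_self]
  have h₁ : Tendsto (fun m => update m i (m i + x i)) (𝓝 (update x i 0)) (𝓝 x) := by
    simpa using ((continuous_id.update i
      ((continuous_apply i).add (continuous_const (y := x i)))).tendsto (update x i 0))
  have h₂ : Tendsto (fun m => update m i (x i)) (𝓝 (update x i 0)) (𝓝 x) := by
    simpa using ((continuous_id.update i (continuous_const (y := x i))).tendsto (update x i 0))
  have := (hf.tendsto.comp h₁).sub (hf.tendsto.comp h₂)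
  rw [sub_self, ← f.map_update_zero x i] at this
  exact this.congr fun m => (hsplit m).symm

theorem continuousAt_zero_of_continuousAt [Fintype ι] [Ring R] [∀ i, Module R (E i)]
    [Module R F] [∀ i, ContinuousAdd (E i)] [IsTopologicalAddGroup F] (f : MultilinearMap R E F)
    {x : ∀ i, E i} (hf : ContinuousAt f x) : ContinuousAt f 0 := by
  have : ∀ s : Finset ι, ContinuousAt f (s.piecewise 0 x) := fun s => by
    induction s using Finset.induction_on with
    | empty => simpa using hf
    | insert i s _ ih => simpa [Finset.piecewise_insert] using f.continuousAt_update_zero ih i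
  simpa using this Finset.univ

variable [NontriviallyNormedField 𝕜] [∀ i, Module 𝕜 (E i)] [Module 𝕜 F]
  [∀ i, ContinuousSMul 𝕜 (E i)] (f : MultilinearMap 𝕜 E F)

theorem tendsto_map_piecewise_nhds_zero (hf : ContinuousAt f 0) (x : ∀ i, E i)
    {s : Finset ι} {i₀ : ι} (hi₀ : i₀ ∉ s) :
    Tendsto (fun h => f (s.piecewise x h)) (𝓝 0) (𝓝 0) := by
  have : Nonempty ι := ⟨i₀⟩
  rw [ContinuousAt, f.map_zero] at hf
  intro W hW
  -- scaling the coordinates in `s` by `c` and coordinate `i₀` by `(c ^ #s)⁻¹` does not change the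
  -- value, and for small `c` it moves the fixed coordinates `x` into a given neighbourhood of `0`
  set p : 𝕜 → (∀ i, E i) → ∀ i, E i :=
    fun c h => update (s.piecewise (c • x) h) i₀ ((c ^ #s)⁻¹ • h i₀)
  have hp : ∀ c ≠ 0, ∀ h, f (p c h) = f (s.piecewise x h) := fun c hc h => by
    have hpiece : s.piecewise (c • x) h = s.piecewise (fun i => c • s.piecewise x h i)
        (s.piecewise x h) := by
      ext i; by_cases hi : i ∈ s <;> simp [hi]
    rw [f.map_update_smul, ← s.piecewise_eq_of_notMem (c • x) h hi₀, update_eq_self, hpiece,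
      f.map_piecewise_smul, Finset.prod_const, inv_smul_smul₀ (pow_ne_zero _ hc)]
  have hp0 : ∀ c, p c 0 = c • s.piecewise x 0 := fun c => by
    ext i
    rcases eq_or_ne i i₀ with rfl | hi
    · simp [p, hi₀]
    · by_cases his : i ∈ s <;> simp [p, hi, his]
  obtain ⟨c, hc, hcW⟩ : ∃ c : 𝕜, c ≠ 0 ∧ p c 0 ∈ interior (f ⁻¹' W) := by
    have hsmall : Tendsto (fun c : 𝕜 => p c 0) (𝓝[≠] 0) (𝓝 0) := by
      simp only [hp0]
      exact (tendsto_nhdsWithin_of_tendsto_nhds tendsto_id).smul_const _ |>.trans (by simp)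
    exact ((hsmall.eventually (isOpen_interior.mem_nhds (mem_interior_iff_mem_nhds.2 (hf hW)))).and
      self_mem_nhdsWithin).exists.imp fun c h => ⟨h.2, h.1⟩
  have hp_cont : Continuous (p c) := by
    refine continuous_pi fun i => ?_
    rcases eq_or_ne i i₀ with rfl | hi
    · simp only [p, update_self]
      fun_prop
    · by_cases his : i ∈ s
      · simpa [p, hi, his] using continuous_const
      · simpa [p, hi, his] using continuous_apply i
  rw [Filter.mem_map]
  filter_upwards [hp_cont.continuousAt.preimage_mem_nhds (isOpen_interior.mem_nhds hcW)] with h hh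
  rw [Set.mem_preimage, ← hp c hc h]
  exact interior_subset (s := f ⁻¹' W) hh

theorem continuous_of_continuousAt_zero [Fintype ι] [∀ i, IsTopologicalAddGroup (E i)]
    [IsTopologicalAddGroup F] (hf : ContinuousAt f 0) : Continuous f := by
  refine continuous_iff_continuousAt.2 fun x => ?_
  have hsum : Tendsto (fun h => ∑ s : Finset ι, f (s.piecewise x h)) (𝓝 0)
      (𝓝 (∑ s : Finset ι, if s = Finset.univ then f x else 0)) := by
    refine tendsto_finsetSum _ fun s _ => ?_
    split_ifs with hs
    · subst hs
      simpa only [Finset.piecewise_univ] using tendsto_const_nhds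
    · obtain ⟨i₀, -, hi₀⟩ := Finset.exists_of_ssubset (Finset.ssubset_univ_iff.2 hs)
      exact f.tendsto_map_piecewise_nhds_zero hf x hi₀
  rw [Finset.sum_ite_eq' Finset.univ Finset.univ, if_pos (Finset.mem_univ _),
    ← funext (f.map_add_univ x)] at hsum
  rwa [ContinuousAt, ← map_add_left_nhds_zero x, tendsto_map'_iff]

theorem continuous_of_continuousAt [Fintype ι] [∀ i, IsTopologicalAddGroup (E i)]
    [IsTopologicalAddGroup F] {x : ∀ i, E i} (hf : ContinuousAt f x) : Continuous f :=
  f.continuous_of_continuousAt_zero (f.continuousAt_zero_of_continuousAt hf)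

end MultilinearMap

theorem Representation.apply_pow_sub_eq_sum {k G V : Type*} [CommSemiring k] [Monoid G]
    [AddCommGroup V] [Module k V] (ρ : Representation k G V) (h : G) (w : V) (n : ℕ) :
    ρ (h ^ n) w - w = ∑ j ∈ Finset.range n, ρ (h ^ j) (ρ h w - w) := by
  calc ρ (h ^ n) w - w = ∑ j ∈ Finset.range n, (ρ (h ^ (j + 1)) w - ρ (h ^ j) w) := by
        rw [Finset.sum_range_sub (fun j => ρ (h ^ j) w), pow_zero, map_one, Module.End.one_apply]
    _ = _ := Finset.sum_congr rfl fun j _ => by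
        rw [pow_succ, map_mul, Module.End.mul_apply, map_sub]

theorem exists_convex_nhds_closure_subset {𝕜 V : Type*} [Semiring 𝕜] [PartialOrder 𝕜]
    [AddCommGroup V] [Module 𝕜 V] [TopologicalSpace V] [IsTopologicalAddGroup V]
    [LocallyConvexSpace 𝕜 V] {b : V} {W : Set V} (hW : W ∈ 𝓝 b) :
    ∃ C ∈ 𝓝 b, Convex 𝕜 C ∧ closure C ⊆ W := by
  obtain ⟨D, ⟨hD, hD_closed⟩, hDW⟩ := (closed_nhds_basis b).mem_iff.1 hW
  obtain ⟨C, ⟨hC, hC_conv⟩, hCD⟩ := (LocallyConvexSpace.convex_basis (𝕜 := 𝕜) b).mem_iff.1 hD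
  exact ⟨C, hC, hC_conv, (closure_minimal hCD hD_closed).trans hDW⟩

namespace ExpLieGroup

variable {G : Type*} [Group G] [TopologicalSpace G]
  {g : Type*} [AddCommGroup g] [Module ℝ g] [TopologicalSpace g]
  {V : Type*} [AddCommGroup V] [Module ℝ V] [TopologicalSpace V]
  (E : ExpLieGroup G g)

/-- `d̄π(x) w = D`. -/
def HasDerivedRep (π : Representation ℝ G V) (x : g) (w D : V) : Prop :=
  Tendsto (fun t : ℝ => t⁻¹ • (π (E.exp (t • x)) w - w)) (𝓝[≠] 0) (𝓝 D)

def expMulExp (x y : g) (s : ℝ) : G := E.exp (s • x) * E.exp (s • y)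

theorem tendsto_exp_smul_nhds_one [ContinuousSMul ℝ g] (x : g) :
    Tendsto (fun s : ℝ => E.exp (s • x)) (𝓝 0) (𝓝 1) := by
  have : Continuous fun s : ℝ => E.exp (s • x) :=
    E.continuous_exp.comp (continuous_id.smul continuous_const)
  simpa [E.exp_zero] using this.tendsto 0

theorem tendsto_expMulExp_nhds_one [IsTopologicalGroup G] [ContinuousSMul ℝ g] (x y : g) :
    Tendsto (E.expMulExp x y) (𝓝 0) (𝓝 1) := by
  have := (E.tendsto_exp_smul_nhds_one x).mul (E.tendsto_exp_smul_nhds_one y)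
  rwa [mul_one] at this

namespace HasTrotter

variable {E} [IsTopologicalGroup G]

theorem tendsto_pow (hE : E.HasTrotter) (x y : g) (t : ℝ) :
    Tendsto (fun n : ℕ => E.expMulExp x y (t / n) ^ n) atTop (𝓝 (E.exp (t • (x + y)))) := by
  have herr : Tendsto (fun n : ℕ => (E.exp (t • (x + y)))⁻¹ * E.expMulExp x y (t / n) ^ n)
      atTop (𝓝 1) := fun U hU => by
    obtain ⟨N, hN⟩ := hE x y {t} isCompact_singleton U hU
    exact eventually_atTop.2 ⟨N, fun n hn => hN n hn t rfl⟩
  simpa using herr.const_mul (E.exp (t • (x + y)))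

theorem eventually_forall_pow_mem [ContinuousSMul ℝ g] (hE : E.HasTrotter) (x y : g)
    {P : Set G} (hP : P ∈ 𝓝 1) :
    ∀ᶠ t in 𝓝 0, ∀ᶠ n : ℕ in atTop, ∀ k ≤ n, E.expMulExp x y (t / n) ^ k ∈ P := by
  obtain ⟨U, hU, hUP⟩ := exists_nhds_one_split hP
  obtain ⟨δ, hδ, hδU⟩ := Metric.eventually_nhds_iff.1 (E.tendsto_exp_smul_nhds_one (x + y) hU)
  obtain ⟨N, hN⟩ := hE x y (Metric.closedBall 0 δ) (isCompact_closedBall 0 δ) U hU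
  filter_upwards [Metric.ball_mem_nhds 0 hδ] with t ht
  have hsmall : ∀ᶠ n : ℕ in atTop, ∀ k ∈ Finset.range N, E.expMulExp x y (t / n) ^ k ∈ P := by
    refine (Filter.eventually_all_finset _).2 fun k _ => ?_
    have := ((E.tendsto_expMulExp_nhds_one x y).comp
      (tendsto_const_div_atTop_nhds_zero_nat t)).pow k
    rw [one_pow] at this
    exact this hP
  filter_upwards [hsmall] with n hn k hkn
  rcases lt_or_ge k N with hk | hk
  · exact hn k (Finset.mem_range.2 hk)
  rcases eq_or_ne k 0 with rfl | hk0
  · simpa using mem_of_mem_nhds hP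
  -- for `k ≥ N` this is the Trotter product of length `k` at time `s = k t / n`, `|s| ≤ |t|`
  set s : ℝ := k * t / n
  have hn0 : (n : ℝ) ≠ 0 := Nat.cast_ne_zero.2 (by omega)
  have hst : |s| ≤ |t| := by
    rw [abs_div, abs_mul, Nat.abs_cast, Nat.abs_cast, div_le_iff₀ (by positivity)]
    nlinarith [abs_nonneg t, (Nat.cast_le.2 hkn : (k : ℝ) ≤ n)]
  have hts : t / n = s / k := by simp only [s]; field_simp
  have hs : dist s 0 < δ := by
    rw [Real.dist_eq, sub_zero]
    exact hst.trans_lt (by simpa using ht)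
  have := hUP _ (hδU hs) _ (hN k hk s (Metric.mem_closedBall.2 hs.le))
  rwa [mul_inv_cancel_left, ← hts] at this

theorem tendsto_average [IsTopologicalAddGroup V] [ContinuousConstSMul ℝ V]
    {π : Representation ℝ G V} (hE : E.HasTrotter) (hπ : Continuous fun p : G × V => π p.1 p.2)
    (x y : g) (w : V) (t : ℝ) :
    Tendsto (fun n : ℕ => ∑ k ∈ Finset.range n, (n : ℝ)⁻¹ •
        π (E.expMulExp x y (t / n) ^ k) ((t / n)⁻¹ • (π (E.expMulExp x y (t / n)) w - w)))
      atTop (𝓝 (t⁻¹ • (π (E.exp (t • (x + y))) w - w))) := by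
  have hlim := ((hπ.comp (continuous_id.prodMk (continuous_const (y := w)))).tendsto _).comp
    (hE.tendsto_pow x y t)
  refine (Tendsto.const_smul (hlim.sub_const w) t⁻¹).congr' <|
    (eventually_ne_atTop 0).mono fun n hn => ?_
  have hn' : (n : ℝ) ≠ 0 := Nat.cast_ne_zero.2 hn
  dsimp only [Function.comp_apply, id]
  rw [Representation.apply_pow_sub_eq_sum, Finset.smul_sum]
  refine Finset.sum_congr rfl fun k _ => ?_
  rw [map_smul, smul_smul]
  congr 1
  field_simp

end HasTrotter

namespace HasDerivedRep

variable {E} {π : Representation ℝ G V} {x y : g} {w w₁ w₂ D D₁ D₂ Dx Dy : V}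

theorem unique [T2Space V] (h₁ : E.HasDerivedRep π x w D₁) (h₂ : E.HasDerivedRep π x w D₂) :
    D₁ = D₂ :=
  tendsto_nhds_unique h₁ h₂

theorem add [ContinuousAdd V] (h₁ : E.HasDerivedRep π x w₁ D₁)
    (h₂ : E.HasDerivedRep π x w₂ D₂) : E.HasDerivedRep π x (w₁ + w₂) (D₁ + D₂) :=
  (Tendsto.add h₁ h₂).congr fun t => by rw [map_add, ← smul_add, add_sub_add_comm]

theorem const_smul [ContinuousConstSMul ℝ V] (c : ℝ) (h : E.HasDerivedRep π x w D) :
    E.HasDerivedRep π x (c • w) (c • D) :=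
  (Tendsto.const_smul h c).congr fun t => by rw [map_smul, smul_comm, smul_sub]

theorem smul_generator [ContinuousConstSMul ℝ V] (c : ℝ) (h : E.HasDerivedRep π x w D) :
    E.HasDerivedRep π (c • x) w (c • D) := by
  rcases eq_or_ne c 0 with rfl | hc
  · simpa [HasDerivedRep, E.exp_zero] using tendsto_const_nhds
  have hmul : Tendsto (c * ·) (𝓝[≠] (0 : ℝ)) (𝓝[≠] 0) := tendsto_nhdsWithin_iff.2
    ⟨by simpa using tendsto_nhdsWithin_of_tendsto_nhds ((continuous_const_mul c).tendsto 0),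
      eventually_mem_nhdsWithin.mono fun t ht => mul_ne_zero hc ht⟩
  refine (Tendsto.const_smul (h.comp hmul) c).congr fun t => ?_
  simp only [Function.comp_apply, smul_smul, mul_comm c t]
  congr 1
  field_simp

theorem tendsto_natCast_smul (h : E.HasDerivedRep π x w D) :
    Tendsto (fun k : ℕ => (k : ℝ) • (π (E.exp ((k : ℝ)⁻¹ • x)) w - w)) atTop (𝓝 D) := by
  have hinv : Tendsto (fun k : ℕ => (k : ℝ)⁻¹) atTop (𝓝[≠] 0) := tendsto_nhdsWithin_iff.2
    ⟨tendsto_inv_atTop_zero.comp tendsto_natCast_atTop_atTop,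
      (eventually_ne_atTop 0).mono fun k hk => inv_ne_zero (Nat.cast_ne_zero.2 hk)⟩
  refine (h.comp hinv).congr fun k => ?_
  rw [Function.comp_apply, inv_inv]

theorem tendsto_expMulExp [ContinuousSMul ℝ g] [ContinuousAdd V]
    (hπ : Continuous fun p : G × V => π p.1 p.2) (hx : E.HasDerivedRep π x w Dx)
    (hy : E.HasDerivedRep π y w Dy) :
    Tendsto (fun s : ℝ => s⁻¹ • (π (E.expMulExp x y s) w - w)) (𝓝[≠] 0) (𝓝 (Dx + Dy)) := by
  have hrot : Tendsto (fun s : ℝ => π (E.exp (s • x)) (s⁻¹ • (π (E.exp (s • y)) w - w)))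
      (𝓝[≠] 0) (𝓝 Dy) := by
    have := (hπ.tendsto (1, Dy)).comp
      (((E.tendsto_exp_smul_nhds_one x).mono_left nhdsWithin_le_nhds).prodMk_nhds hy)
    rwa [map_one, Module.End.one_apply] at this
  refine (Tendsto.add hx hrot).congr fun s => ?_
  simp only [expMulExp, map_mul, Module.End.mul_apply, map_smul, map_sub, ← smul_add]
  abel_nf

theorem add_generator [IsTopologicalGroup G] [ContinuousSMul ℝ g] [IsTopologicalAddGroup V]
    [ContinuousSMul ℝ V] [LocallyConvexSpace ℝ V] (hE : E.HasTrotter)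
    (hπ : Continuous fun p : G × V => π p.1 p.2)
    (hx : E.HasDerivedRep π x w Dx) (hy : E.HasDerivedRep π y w Dy) :
    E.HasDerivedRep π (x + y) w (Dx + Dy) := by
  intro W hW
  rw [Filter.mem_map]
  obtain ⟨C, hC, hC_conv, hCW⟩ := exists_convex_nhds_closure_subset (𝕜 := ℝ) hW
  obtain ⟨P, hP, B, hB, hPB⟩ : ∃ P ∈ 𝓝 (1 : G), ∃ B ∈ 𝓝 (Dx + Dy), ∀ h ∈ P, ∀ u ∈ B,
      π h u ∈ C := by
    have : Tendsto (fun p : G × V => π p.1 p.2) (𝓝 (1, Dx + Dy)) (𝓝 (Dx + Dy)) := by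
      simpa using hπ.tendsto (1, Dx + Dy)
    obtain ⟨P, hP, B, hB, hPB⟩ := mem_nhds_prod_iff.1 (this hC)
    exact ⟨P, hP, B, hB, fun h hh u hu => hPB (mk_mem_prod hh hu)⟩
  filter_upwards [nhdsWithin_le_nhds (hE.eventually_forall_pow_mem x y hP),
    self_mem_nhdsWithin] with t hPt (ht : t ≠ 0)
  refine hCW (mem_closure_of_tendsto (hE.tendsto_average hπ x y w t) ?_)
  have htn : Tendsto (fun n : ℕ => t / n) atTop (𝓝[≠] 0) := tendsto_nhdsWithin_iff.2
    ⟨tendsto_const_div_atTop_nhds_zero_nat t,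
      (eventually_ne_atTop 0).mono fun n hn => div_ne_zero ht (Nat.cast_ne_zero.2 hn)⟩
  filter_upwards [hPt, (hx.tendsto_expMulExp hπ hy).comp htn hB, eventually_ne_atTop 0]
    with n hPn hBn hn
  refine hC_conv.sum_mem (fun _ _ => by positivity) ?_
    fun k hk => hPB _ (hPn k (Finset.mem_range.1 hk).le) _ hBn
  simp [hn]

end HasDerivedRep

end ExpLieGroup

section IteratedDerived

variable {G : Type*} [Group G] [TopologicalSpace G]
  {g : Type*} [AddCommGroup g] [Module ℝ g] [TopologicalSpace g] [ContinuousSMul ℝ g]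
  {V : Type*} [AddCommGroup V] [Module ℝ V] [TopologicalSpace V] [IsTopologicalAddGroup V]
  [ContinuousSMul ℝ V] {E : ExpLieGroup G g} {π : Representation ℝ G V} {n : ℕ}

theorem exists_multilinearMap_of_hasDerivedRep [IsTopologicalGroup G] [LocallyConvexSpace ℝ V]
    [T2Space V] (hE : E.HasTrotter) (hπ : Continuous fun p : G × V => π p.1 p.2)
    (M : MultilinearMap ℝ (fun _ : Fin n => g) V) {Ψ : (Fin (n + 1) → g) → V}
    (hΨ : ∀ x ys, E.HasDerivedRep π x (M ys) (Ψ (Fin.cons x ys))) :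
    ∃ N : MultilinearMap ℝ (fun _ : Fin (n + 1) => g) V, ⇑N = Ψ := by
  let L : g →ₗ[ℝ] MultilinearMap ℝ (fun _ : Fin n => g) V :=
    { toFun x :=
        { toFun ys := Ψ (Fin.cons x ys)
          map_update_add' ys j a b := by
            have h := hΨ x (update ys j (a + b))
            rw [M.map_update_add] at h
            exact h.unique ((hΨ x _).add (hΨ x _))
          map_update_smul' ys j c a := by
            have h := hΨ x (update ys j (c • a))
            rw [M.map_update_smul] at h
            exact h.unique ((hΨ x _).const_smul c) }
      map_add' x y := MultilinearMap.ext fun ys =>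
        (hΨ (x + y) ys).unique ((hΨ x ys).add_generator hE hπ (hΨ y ys))
      map_smul' c x := MultilinearMap.ext fun ys =>
        (hΨ (c • x) ys).unique ((hΨ x ys).smul_generator c) }
  exact ⟨L.uncurryLeft, funext fun xs => by simp [L, LinearMap.uncurryLeft_apply]⟩

theorem continuous_of_hasDerivedRep [IsTopologicalAddGroup g] [BaireSpace (Fin (n + 1) → g)]
    [TopologicalSpace.MetrizableSpace V] (hπ : Continuous fun p : G × V => π p.1 p.2)
    (N : MultilinearMap ℝ (fun _ : Fin (n + 1) => g) V) {M : (Fin n → g) → V}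
    (hM : Continuous M) (hN : ∀ xs, E.HasDerivedRep π (xs 0) (M (Fin.tail xs)) (N xs)) :
    Continuous N := by
  let := TopologicalSpace.metrizableSpaceMetric V
  have hM' : Continuous fun xs : Fin (n + 1) → g => M (Fin.tail xs) :=
    hM.comp (continuous_pi fun i => continuous_apply _)
  have hcont : ∀ k : ℕ, Continuous fun xs : Fin (n + 1) → g =>
      (k : ℝ) • (π (E.exp ((k : ℝ)⁻¹ • xs 0)) (M (Fin.tail xs)) - M (Fin.tail xs)) := fun k =>
    ((hπ.comp ((E.continuous_exp.comp ((continuous_apply 0).const_smul _)).prodMk hM')).sub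
      hM').const_smul _
  obtain ⟨xs₀, hxs₀⟩ := (dense_setOf_continuousAt_of_tendsto hcont
    fun xs => (hN xs).tendsto_natCast_smul).nonempty
  exact N.continuous_of_continuousAt hxs₀

end IteratedDerived

/-- `Φ m xs` stands for `d̄π(xs 0) ⋯ d̄π(xs (m - 1)) v`, the value of `ω_vᵐ`. -/
theorem iterated_derived_representation_continuous_multilinear_general
    {G : Type*} [Group G] [TopologicalSpace G] [IsTopologicalGroup G]
    -- `g` is a Fréchet space:
    {g : Type*} [AddCommGroup g] [Module ℝ g] [UniformSpace g] [IsUniformAddGroup g]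
    [ContinuousSMul ℝ g] [CompleteSpace g]
    [TopologicalSpace.MetrizableSpace g]
    -- `V` is a metrizable locally convex space:
    {V : Type*} [AddCommGroup V] [Module ℝ V] [TopologicalSpace V]
    [IsTopologicalAddGroup V] [ContinuousSMul ℝ V] [LocallyConvexSpace ℝ V]
    [TopologicalSpace.MetrizableSpace V]
    (E : ExpLieGroup G g) (hE : E.HasTrotter)
    (π : Representation ℝ G V)
    (hπ : Continuous fun p : G × V => π p.1 p.2)
    (n : ℕ) (v : V)
    (Φ : (m : ℕ) → (Fin m → g) → V)
    (hΦ0 : ∀ xs : Fin 0 → g, Φ 0 xs = v)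
    (hΦder : ∀ m < n, ∀ (x : g) (xs : Fin m → g),
      Tendsto (fun t : ℝ => t⁻¹ • (π (E.exp (t • x)) (Φ m xs) - Φ m xs))
        (𝓝[≠] (0 : ℝ)) (𝓝 (Φ (m + 1) (Fin.cons x xs)))) :
    Continuous (Φ n) ∧
      (∀ (xs : Fin n → g) (i : Fin n) (a b : g),
        Φ n (Function.update xs i (a + b)) =
          Φ n (Function.update xs i a) + Φ n (Function.update xs i b)) ∧
      (∀ (xs : Fin n → g) (i : Fin n) (c : ℝ) (a : g),
        Φ n (Function.update xs i (c • a)) = c • Φ n (Function.update xs i a)) := by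
  -- with completeness, this makes `Fin (m + 1) → g` a Baire space
  have : (uniformity g).IsCountablyGenerated := IsUniformAddGroup.uniformity_countably_generated
  suffices h : ∀ m ≤ n, ∃ M : ContinuousMultilinearMap ℝ (fun _ : Fin m => g) V, ⇑M = Φ m by
    obtain ⟨M, hM⟩ := h n le_rfl
    rw [← hM]
    exact ⟨M.cont, M.map_update_add, M.map_update_smul⟩
  intro m hm
  induction m with
  | zero => exact ⟨ContinuousMultilinearMap.constOfIsEmpty ℝ _ v, funext fun xs => (hΦ0 xs).symm⟩
  | succ m ih =>
    obtain ⟨M, hM⟩ := ih (by omega)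
    have hder : ∀ x ys, E.HasDerivedRep π x (M ys) (Φ (m + 1) (Fin.cons x ys)) := fun x ys => by
      rw [hM]
      exact hΦder m hm x ys
    obtain ⟨N, hN⟩ := exists_multilinearMap_of_hasDerivedRep hE hπ M.toMultilinearMap hder
    refine ⟨⟨N, continuous_of_hasDerivedRep (E := E) hπ N M.cont fun xs => ?_⟩, hN⟩
    simpa [hN] using hder (xs 0) (Fin.tail xs)

/-- **Lemma 4.8.** Let `(π, V)` be a continuous representation of the Fréchet–Lie group
`G` with the Trotter property on a metrizable locally convex space `V`.  For `v ∈ Dⁿ`,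
the iterated derived operators are recorded by the family `Φ`:
`Φ 0 = v` and `Φ (m+1) (x ::ᵥ xs) = d̄π(x) (Φ m xs)` for `m < n`.  Then the map
`ω_vⁿ = Φ n : 𝔤ⁿ → V`, `(x₁, …, xₙ) ↦ d̄π(x₁) ⋯ d̄π(xₙ) v`, is continuous and
`n`-linear in each argument. -/
theorem iterated_derived_representation_continuous_multilinear
    {G : Type*} [Group G] [TopologicalSpace G] [IsTopologicalGroup G] [T2Space G]
    -- `g` is a Fréchet space:
    {g : Type*} [AddCommGroup g] [Module ℝ g] [UniformSpace g] [IsUniformAddGroup g]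
    [ContinuousSMul ℝ g] [LocallyConvexSpace ℝ g] [CompleteSpace g]
    [TopologicalSpace.MetrizableSpace g]
    -- `V` is a metrizable locally convex space:
    {V : Type*} [AddCommGroup V] [Module ℝ V] [TopologicalSpace V]
    [IsTopologicalAddGroup V] [ContinuousSMul ℝ V] [LocallyConvexSpace ℝ V]
    [TopologicalSpace.MetrizableSpace V] [T2Space V]
    (E : ExpLieGroup G g) (hE : E.HasTrotter)
    (π : Representation ℝ G V)
    (hπ : Continuous fun p : G × V => π p.1 p.2)
    (n : ℕ) (v : V)
    (Φ : (m : ℕ) → (Fin m → g) → V)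
    (hΦ0 : ∀ xs : Fin 0 → g, Φ 0 xs = v)
    (hΦder : ∀ m < n, ∀ (x : g) (xs : Fin m → g),
      Tendsto (fun t : ℝ => t⁻¹ • (π (E.exp (t • x)) (Φ m xs) - Φ m xs))
        (𝓝[≠] (0 : ℝ)) (𝓝 (Φ (m + 1) (Fin.cons x xs)))) :
    Continuous (Φ n) ∧
      (∀ (xs : Fin n → g) (i : Fin n) (a b : g),
        Φ n (Function.update xs i (a + b)) =
          Φ n (Function.update xs i a) + Φ n (Function.update xs i b)) ∧
      (∀ (xs : Fin n → g) (i : Fin n) (c : ℝ) (a : g),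
        Φ n (Function.update xs i (c • a)) = c • Φ n (Function.update xs i a)) :=
  iterated_derived_representation_continuous_multilinear_general E hE π hπ n v Φ hΦ0 hΦder
end
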